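/- On a Riemannian manifold (M,g) with f ∈ C^∞(M), the weighted contracted Bianchi identity holds: ∇^a(R_{ab} + ∇_a∇_b f) − (∇^a f)(R_{ab} + ∇_a∇_b f) = (1/2)∇_b(R + 2Δf − |∇f|²). -/

import Mathlib

noncomputable section

open Filter Asymptotics

/-- Points of coordinate space. -/
abbrev Pt (n : ℕ) : Type := EuclideanSpace ℝ (Fin n)

/-- The `i`-th coordinate partial derivative of a function. -/
def pd {n : ℕ} (i : Fin n) (F : Pt n → ℝ) (x : Pt n) : ℝ :=
  fderiv ℝ F x (EuclideanSpace.single i 1)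

/-- Christoffel symbols `Γ^k_{ij}` of a metric `g`, given in coordinates as a
matrix-valued function; indices are raised using the matrix inverse of `g`. -/
def christoffel {n : ℕ} (g : Pt n → Matrix (Fin n) (Fin n) ℝ) (k i j : Fin n) (x : Pt n) : ℝ :=
  (1 / 2) * ∑ l, (g x)⁻¹ k l *
    (pd i (fun y => g y j l) x + pd j (fun y => g y i l) x - pd l (fun y => g y i j) x)

/-- Ricci curvature `R_{ij}` of `g` in coordinates. -/
def ricci {n : ℕ} (g : Pt n → Matrix (Fin n) (Fin n) ℝ) (i j : Fin n) (x : Pt n) : ℝ :=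
  (∑ k, pd k (christoffel g k i j) x) - (∑ k, pd i (christoffel g k k j) x)
    + (∑ k, ∑ l, christoffel g k k l x * christoffel g l i j x)
    - (∑ k, ∑ l, christoffel g k i l x * christoffel g l k j x)

/-- Scalar curvature `R = g^{ij} R_{ij}`. -/
def scalarCurv {n : ℕ} (g : Pt n → Matrix (Fin n) (Fin n) ℝ) (x : Pt n) : ℝ :=
  ∑ i, ∑ j, (g x)⁻¹ i j * ricci g i j x

/-- Hessian `(∇∇ f)_{ij} = ∂_i ∂_j f - Γ^k_{ij} ∂_k f`. -/
def hessian {n : ℕ} (g : Pt n → Matrix (Fin n) (Fin n) ℝ) (f : Pt n → ℝ) (i j : Fin n)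
    (x : Pt n) : ℝ :=
  pd i (pd j f) x - ∑ k, christoffel g k i j x * pd k f x

/-- Laplacian `Δ f = g^{ij} (∇∇ f)_{ij}`. -/
def laplacian {n : ℕ} (g : Pt n → Matrix (Fin n) (Fin n) ℝ) (f : Pt n → ℝ) (x : Pt n) : ℝ :=
  ∑ i, ∑ j, (g x)⁻¹ i j * hessian g f i j x

/-- `|∇ f|² = g^{ij} ∂_i f ∂_j f`. -/
def gradSq {n : ℕ} (g : Pt n → Matrix (Fin n) (Fin n) ℝ) (f : Pt n → ℝ) (x : Pt n) : ℝ :=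
  ∑ i, ∑ j, (g x)⁻¹ i j * pd i f x * pd j f x

/-- Covariant derivative `∇_a T_{bc}` of a 2-tensor `T` with respect to the
Levi-Civita connection of `g`. -/
def covDeriv2 {n : ℕ} (g : Pt n → Matrix (Fin n) (Fin n) ℝ) (T : Fin n → Fin n → Pt n → ℝ)
    (a b c : Fin n) (x : Pt n) : ℝ :=
  pd a (T b c) x - (∑ d, christoffel g d a b x * T d c x)
    - ∑ d, christoffel g d a c x * T b d x

/-- `g` is a smooth Riemannian metric in coordinates. -/
structure IsMetric {n : ℕ} (g : Pt n → Matrix (Fin n) (Fin n) ℝ) : Prop where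
  smooth : ∀ i j, ContDiff ℝ (⊤ : ℕ∞) fun x => g x i j
  symm : ∀ x, (g x).IsSymm
  posdef : ∀ x, (g x).PosDef


namespace WCB


variable {n : ℕ}

/-- Smooth real function on coordinate space. -/
def Sm (F : Pt n → ℝ) : Prop := ContDiff ℝ (⊤ : ℕ∞) F

theorem Sm.const (c : ℝ) : Sm (fun _ : Pt n => c) := contDiff_const

theorem Sm.add {F G : Pt n → ℝ} (hF : Sm F) (hG : Sm G) : Sm (fun y => F y + G y) := ContDiff.add hF hG
theorem Sm.sub {F G : Pt n → ℝ} (hF : Sm F) (hG : Sm G) : Sm (fun y => F y - G y) := ContDiff.sub hF hG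
theorem Sm.mul {F G : Pt n → ℝ} (hF : Sm F) (hG : Sm G) : Sm (fun y => F y * G y) := ContDiff.mul hF hG
theorem Sm.neg {F : Pt n → ℝ} (hF : Sm F) : Sm (fun y => - F y) := ContDiff.neg hF
theorem Sm.div_const {F : Pt n → ℝ} (hF : Sm F) (c : ℝ) : Sm (fun y => F y / c) := ContDiff.div_const hF c

theorem Sm.sum {ι : Type*} {s : Finset ι} {F : ι → Pt n → ℝ} (h : ∀ k ∈ s, Sm (F k)) :
    Sm (fun y => ∑ k ∈ s, F k y) := ContDiff.sum h

theorem Sm.diffAt {F : Pt n → ℝ} (hF : Sm F) (x : Pt n) : DifferentiableAt ℝ F x :=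
  (hF.differentiable (by simp)) x

theorem Sm.pd {F : Pt n → ℝ} (hF : Sm F) (i : Fin n) : Sm (pd i F) := by
  have h1 : ContDiff ℝ (⊤ : ℕ∞) (fderiv ℝ F) := hF.fderiv_right (by simp)
  exact h1.clm_apply contDiff_const

theorem pd_congr {F G : Pt n → ℝ} (h : ∀ y, F y = G y) (i : Fin n) (x : Pt n) :
    pd i F x = pd i G x := by
  have : F = G := funext h
  rw [this]

theorem pd_const (c : ℝ) (i : Fin n) (x : Pt n) : pd i (fun _ => c) x = 0 := by
  simp [pd]

theorem pd_add {F G : Pt n → ℝ} (hF : Sm F) (hG : Sm G) (i : Fin n) (x : Pt n) :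
    pd i (fun y => F y + G y) x = pd i F x + pd i G x := by
  simp [pd, fderiv_fun_add (hF.diffAt x) (hG.diffAt x)]

theorem pd_sub {F G : Pt n → ℝ} (hF : Sm F) (hG : Sm G) (i : Fin n) (x : Pt n) :
    pd i (fun y => F y - G y) x = pd i F x - pd i G x := by
  simp [pd, fderiv_fun_sub (hF.diffAt x) (hG.diffAt x)]

theorem pd_neg {F : Pt n → ℝ} (i : Fin n) (x : Pt n) :
    pd i (fun y => - F y) x = - pd i F x := by
  simp [pd, fderiv_neg]

theorem pd_mul {F G : Pt n → ℝ} (hF : Sm F) (hG : Sm G) (i : Fin n) (x : Pt n) :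
    pd i (fun y => F y * G y) x = pd i F x * G x + F x * pd i G x := by
  simp [pd, fderiv_fun_mul (hF.diffAt x) (hG.diffAt x)]
  ring

theorem pd_const_mul {F : Pt n → ℝ} (hF : Sm F) (c : ℝ) (i : Fin n) (x : Pt n) :
    pd i (fun y => c * F y) x = c * pd i F x := by
  rw [pd_mul (Sm.const c) hF, pd_const]; ring

theorem pd_div_const {F : Pt n → ℝ} (hF : Sm F) (c : ℝ) (i : Fin n) (x : Pt n) :
    pd i (fun y => F y / c) x = pd i F x / c := by
  simp only [div_eq_mul_inv, pd_mul hF (Sm.const c⁻¹), pd_const]; ring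

theorem pd_sum {ι : Type*} {F : ι → Pt n → ℝ} (s : Finset ι) (h : ∀ k, Sm (F k))
    (i : Fin n) (x : Pt n) :
    pd i (fun y => ∑ k ∈ s, F k y) x = ∑ k ∈ s, pd i (F k) x := by
  classical
  induction s using Finset.induction_on with
  | empty => simp [pd_const]
  | @insert a s' hk ih =>
    rw [Finset.sum_insert hk]
    rw [pd_congr (fun y => Finset.sum_insert hk) i x,
      pd_add (h a) (Sm.sum (fun k _ => h k)), ih]

/-- Schwarz / Clairaut symmetry of second partials for smooth functions. -/
theorem pd_comm {F : Pt n → ℝ} (hF : Sm F) (i j : Fin n) (x : Pt n) :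
    pd i (pd j F) x = pd j (pd i F) x := by
  have hdF : ContDiff ℝ (⊤ : ℕ∞) (fderiv ℝ F) := hF.fderiv_right (by simp)
  have key : ∀ (v w : Pt n),
      fderiv ℝ (fun y => fderiv ℝ F y v) x w = fderiv ℝ (fderiv ℝ F) x w v := by
    intro v w
    have : (fun y => fderiv ℝ F y v)
        = (ContinuousLinearMap.apply ℝ ℝ v) ∘ (fderiv ℝ F) := rfl
    rw [this, fderiv_comp x ((ContinuousLinearMap.apply ℝ ℝ v).differentiableAt)
      ((hdF.differentiable (by simp)) x)]
    simp
  have hsymm := second_derivative_symmetric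
    (f' := fderiv ℝ F) (f'' := fderiv ℝ (fderiv ℝ F) x)
    (fun y => ((hF.differentiable (by simp)) y).hasFDerivAt)
    (((hdF.differentiable (by simp)) x).hasFDerivAt)
    (EuclideanSpace.single j 1) (EuclideanSpace.single i 1)
  unfold pd
  rw [key, key, hsymm]


section Metric

variable {n : ℕ} {g : Pt n → Matrix (Fin n) (Fin n) ℝ}

/-- metric entry as a function -/
def Gm (g : Pt n → Matrix (Fin n) (Fin n) ℝ) (i j : Fin n) : Pt n → ℝ := fun y => g y i j

/-- inverse metric entry as a function -/
def Bm (g : Pt n → Matrix (Fin n) (Fin n) ℝ) (i j : Fin n) : Pt n → ℝ := fun y => (g y)⁻¹ i j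

/-- lowered Christoffel symbol -/
def Gl (g : Pt n → Matrix (Fin n) (Fin n) ℝ) (k i j : Fin n) : Pt n → ℝ := fun y =>
  (pd i (Gm g j k) y + pd j (Gm g i k) y - pd k (Gm g i j) y) / 2

theorem smG (hg : IsMetric g) (i j : Fin n) : Sm (Gm g i j) := hg.smooth i j

theorem G_symm (hg : IsMetric g) (i j : Fin n) : Gm g i j = Gm g j i := by
  funext y; exact ((hg.symm y).apply i j).symm

theorem Sm.prod {ι : Type*} {s : Finset ι} {F : ι → Pt n → ℝ} (h : ∀ k ∈ s, Sm (F k)) :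
    Sm (fun y => ∏ k ∈ s, F k y) := by
  classical
  induction s using Finset.induction_on with
  | empty => simpa using Sm.const (n := n) 1
  | @insert a s' hk ih =>
    have : (fun y => ∏ k ∈ insert a s', F k y) = fun y => F a y * ∏ k ∈ s', F k y := by
      funext y; rw [Finset.prod_insert hk]
    rw [this]
    exact (h a (Finset.mem_insert_self a s')).mul
      (ih (fun k hks => h k (Finset.mem_insert_of_mem hks)))

theorem smDetAux (M : Pt n → Matrix (Fin n) (Fin n) ℝ) (h : ∀ i j, Sm (fun y => M y i j)) :
    Sm (fun y => (M y).det) := by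
  have : (fun y => (M y).det)
      = fun y => ∑ σ : Equiv.Perm (Fin n), (Equiv.Perm.sign σ : ℤ) *
          ∏ i, M y (σ i) i := by
    funext y
    rw [Matrix.det_apply' (M y)]
  rw [this]
  refine Sm.sum (fun σ _ => ?_)
  have hp : Sm (fun y => ∏ i, M y (σ i) i) := Sm.prod (fun k _ => h (σ k) k)
  have := (Sm.const (n := n) ((Equiv.Perm.sign σ : ℤ) : ℝ)).mul hp
  exact this

theorem smDet (hg : IsMetric g) : Sm (fun y => (g y).det) :=
  smDetAux g (fun i j => hg.smooth i j)

theorem detNe (hg : IsMetric g) (y : Pt n) : (g y).det ≠ 0 :=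
  ne_of_gt (hg.posdef y).det_pos

theorem smAdj (hg : IsMetric g) (i j : Fin n) : Sm (fun y => (g y).adjugate i j) := by
  have : (fun y => (g y).adjugate i j)
      = fun y => ((g y).updateRow j (Pi.single i 1)).det := by
    funext y; rw [Matrix.adjugate_apply]
  rw [this]
  refine smDetAux _ (fun k l => ?_)
  by_cases hkj : k = j
  · subst hkj
    have : (fun y => (g y).updateRow k (Pi.single i 1) k l) = fun _ : Pt n => (Pi.single (M := fun _ : Fin n => ℝ) i 1 l) := by
      funext y; simp [Matrix.updateRow_apply]
    rw [this]; exact Sm.const _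
  · have : (fun y => (g y).updateRow j (Pi.single i 1) k l) = fun y => g y k l := by
      funext y; simp [Matrix.updateRow_apply, hkj]
    rw [this]; exact hg.smooth k l

theorem smB (hg : IsMetric g) (i j : Fin n) : Sm (Bm g i j) := by
  have : Bm g i j = fun y => ((g y).det)⁻¹ * (g y).adjugate i j := by
    funext y
    show (g y)⁻¹ i j = _
    rw [Matrix.inv_def]
    simp [Ring.inverse_eq_inv']
  rw [this]
  exact ((smDet hg).inv (detNe hg)).mul (smAdj hg i j)

theorem B_symm (hg : IsMetric g) (i j : Fin n) : Bm g i j = Bm g j i := by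
  funext y
  show (g y)⁻¹ i j = (g y)⁻¹ j i
  have h1 : Matrix.transpose ((g y)⁻¹) = (Matrix.transpose (g y))⁻¹ :=
    Matrix.transpose_nonsing_inv (g y)
  have h2 : (Matrix.transpose (g y))⁻¹ = (g y)⁻¹ := by rw [(hg.symm y).eq]
  have h3 : Matrix.transpose ((g y)⁻¹) i j = (g y)⁻¹ i j := by rw [h1, h2]
  rw [← h3, Matrix.transpose_apply]

theorem GB (hg : IsMetric g) (i j : Fin n) (x : Pt n) :
    ∑ k, Gm g i k x * Bm g k j x = if i = j then (1:ℝ) else 0 := by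
  have h := Matrix.mul_nonsing_inv (g x) (isUnit_iff_ne_zero.2 (detNe hg x))
  have := congrFun (congrFun h i) j
  rw [Matrix.mul_apply] at this
  simpa [Matrix.one_apply, Gm, Bm] using this

theorem BG (hg : IsMetric g) (i j : Fin n) (x : Pt n) :
    ∑ k, Bm g i k x * Gm g k j x = if i = j then (1:ℝ) else 0 := by
  have h := Matrix.nonsing_inv_mul (g x) (isUnit_iff_ne_zero.2 (detNe hg x))
  have := congrFun (congrFun h i) j
  rw [Matrix.mul_apply] at this
  simpa [Matrix.one_apply, Gm, Bm] using this

theorem sum_delta_mul (k : Fin n) (F : Fin n → ℝ) :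
    ∑ m, (if k = m then (1:ℝ) else 0) * F m = F k := by simp

theorem sum_mul_delta (k : Fin n) (F : Fin n → ℝ) :
    ∑ m, F m * (if m = k then (1:ℝ) else 0) = F k := by simp

end Metric

section Christoffel

variable {n : ℕ} {g : Pt n → Matrix (Fin n) (Fin n) ℝ}

theorem smGl (hg : IsMetric g) (k i j : Fin n) : Sm (Gl g k i j) :=
  ((((smG hg j k).pd i).add ((smG hg i k).pd j)).sub ((smG hg i j).pd k)).div_const 2

theorem christoffel_eq (g : Pt n → Matrix (Fin n) (Fin n) ℝ) (k i j : Fin n) :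
    christoffel g k i j = fun x => ∑ l, Bm g k l x * Gl g l i j x := by
  funext x
  show (1 / 2) * ∑ l, (g x)⁻¹ k l *
      (pd i (fun y => g y j l) x + pd j (fun y => g y i l) x - pd l (fun y => g y i j) x) = _
  rw [Finset.mul_sum]
  refine Finset.sum_congr rfl fun l _ => ?_
  show (1:ℝ)/2 * (Bm g k l x * (pd i (Gm g j l) x + pd j (Gm g i l) x - pd l (Gm g i j) x))
      = Bm g k l x * ((pd i (Gm g j l) x + pd j (Gm g i l) x - pd l (Gm g i j) x) / 2)
  ring

theorem smGamma (hg : IsMetric g) (k i j : Fin n) : Sm (christoffel g k i j) := by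
  rw [christoffel_eq]
  exact Sm.sum (fun l _ => (smB hg k l).mul (smGl hg l i j))

theorem Gl_symm (hg : IsMetric g) (k i j : Fin n) : Gl g k i j = Gl g k j i := by
  funext y
  show (pd i (Gm g j k) y + pd j (Gm g i k) y - pd k (Gm g i j) y) / 2
      = (pd j (Gm g i k) y + pd i (Gm g j k) y - pd k (Gm g j i) y) / 2
  rw [G_symm hg j i]; ring

theorem Gamma_symm (hg : IsMetric g) (k i j : Fin n) :
    christoffel g k i j = christoffel g k j i := by
  rw [christoffel_eq, christoffel_eq]
  funext x
  exact Finset.sum_congr rfl fun l _ => by rw [Gl_symm hg l i j]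

theorem pdG (hg : IsMetric g) (a i j : Fin n) (x : Pt n) :
    pd a (Gm g i j) x = Gl g i a j x + Gl g j a i x := by
  show _ = (pd a (Gm g j i) x + pd j (Gm g a i) x - pd i (Gm g a j) x) / 2
      + (pd a (Gm g i j) x + pd i (Gm g a j) x - pd j (Gm g a i) x) / 2
  rw [G_symm hg j i]; ring

theorem lowerGamma (hg : IsMetric g) (k i j : Fin n) (x : Pt n) :
    ∑ l, Gm g k l x * christoffel g l i j x = Gl g k i j x := by
  calc ∑ l, Gm g k l x * christoffel g l i j x
      = ∑ l, ∑ m, Gm g k l x * Bm g l m x * Gl g m i j x := by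
        refine Finset.sum_congr rfl fun l _ => ?_
        rw [christoffel_eq, Finset.mul_sum]
        exact Finset.sum_congr rfl fun m _ => by ring
    _ = ∑ m, ∑ l, Gm g k l x * Bm g l m x * Gl g m i j x := Finset.sum_comm
    _ = ∑ m, (∑ l, Gm g k l x * Bm g l m x) * Gl g m i j x := by
        exact Finset.sum_congr rfl fun m _ => (Finset.sum_mul _ _ _).symm
    _ = ∑ m, (if k = m then (1:ℝ) else 0) * Gl g m i j x := by
        exact Finset.sum_congr rfl fun m _ => by rw [GB hg k m x]
    _ = Gl g k i j x := sum_delta_mul k _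

theorem pdB_raw (hg : IsMetric g) (a i j : Fin n) (x : Pt n) :
    pd a (Bm g i j) x = -∑ p, ∑ k, Bm g i p x * pd a (Gm g p k) x * Bm g k j x := by
  have key : ∀ p : Fin n,
      ∑ k, Gm g p k x * pd a (Bm g k j) x = -∑ k, pd a (Gm g p k) x * Bm g k j x := by
    intro p
    have hfun : (fun y => ∑ k, Gm g p k y * Bm g k j y)
        = (fun _ : Pt n => if p = j then (1:ℝ) else 0) := by
      funext y; exact GB hg p j y
    have h0 : pd a (fun y => ∑ k, Gm g p k y * Bm g k j y) x = 0 := by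
      rw [hfun, pd_const]
    rw [pd_sum _ (fun k => (smG hg p k).mul (smB hg k j))] at h0
    have h1 : ∀ k ∈ Finset.univ (α := Fin n),
        pd a (fun y => Gm g p k y * Bm g k j y) x
          = pd a (Gm g p k) x * Bm g k j x + Gm g p k x * pd a (Bm g k j) x :=
      fun k _ => pd_mul (smG hg p k) (smB hg k j) a x
    rw [Finset.sum_congr rfl h1, Finset.sum_add_distrib] at h0
    linarith [h0]
  calc pd a (Bm g i j) x
      = ∑ p, (if i = p then (1:ℝ) else 0) * pd a (Bm g p j) x :=
        (sum_delta_mul i (fun p => pd a (Bm g p j) x)).symm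
    _ = ∑ p, (∑ k, Bm g i k x * Gm g k p x) * pd a (Bm g p j) x := by
        exact Finset.sum_congr rfl fun p _ => by rw [BG hg i p x]
    _ = ∑ p, ∑ k, Bm g i k x * (Gm g k p x * pd a (Bm g p j) x) := by
        refine Finset.sum_congr rfl fun p _ => ?_
        rw [Finset.sum_mul]
        exact Finset.sum_congr rfl fun k _ => by ring
    _ = ∑ k, ∑ p, Bm g i k x * (Gm g k p x * pd a (Bm g p j) x) := Finset.sum_comm
    _ = ∑ k, Bm g i k x * ∑ p, Gm g k p x * pd a (Bm g p j) x := by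
        exact Finset.sum_congr rfl fun k _ => (Finset.mul_sum _ _ _).symm
    _ = ∑ k, Bm g i k x * -∑ p, pd a (Gm g k p) x * Bm g p j x := by
        exact Finset.sum_congr rfl fun k _ => by rw [key k]
    _ = -∑ k, ∑ p, Bm g i k x * pd a (Gm g k p) x * Bm g p j x := by
        rw [← Finset.sum_neg_distrib]
        refine Finset.sum_congr rfl fun k _ => ?_
        rw [mul_neg, Finset.mul_sum]
        congr 1
        exact Finset.sum_congr rfl fun p _ => by ring

theorem pdB (hg : IsMetric g) (a i j : Fin n) (x : Pt n) :
    pd a (Bm g i j) x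
      = -∑ k, (christoffel g i a k x * Bm g k j x + Bm g i k x * christoffel g j a k x) := by
  rw [pdB_raw hg a i j x]
  congr 1
  calc ∑ p, ∑ k, Bm g i p x * pd a (Gm g p k) x * Bm g k j x
      = ∑ p, ∑ k, (Bm g i p x * Gl g p a k x * Bm g k j x
          + Bm g i p x * Gl g k a p x * Bm g k j x) := by
        refine Finset.sum_congr rfl fun p _ => Finset.sum_congr rfl fun k _ => ?_
        rw [pdG hg a p k x]; ring
    _ = (∑ p, ∑ k, Bm g i p x * Gl g p a k x * Bm g k j x)
        + ∑ p, ∑ k, Bm g i p x * Gl g k a p x * Bm g k j x := by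
        rw [← Finset.sum_add_distrib]
        exact Finset.sum_congr rfl fun p _ => Finset.sum_add_distrib
    _ = ∑ k, (christoffel g i a k x * Bm g k j x + Bm g i k x * christoffel g j a k x) := by
        rw [Finset.sum_add_distrib]
        congr 1
        · rw [Finset.sum_comm]
          refine Finset.sum_congr rfl fun k _ => ?_
          rw [christoffel_eq, Finset.sum_mul]
        · refine Finset.sum_congr rfl fun p _ => ?_
          rw [christoffel_eq, Finset.mul_sum]
          refine Finset.sum_congr rfl fun k _ => ?_
          have hbs : Bm g k j x = Bm g j k x := by rw [B_symm hg k j]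
          rw [hbs]; ring
    
end Christoffel

section Curvature

variable {n : ℕ} {g : Pt n → Matrix (Fin n) (Fin n) ℝ}

/-- Riemann curvature tensor (1,3): `R^d_{e b c}`. -/
def Rm (g : Pt n → Matrix (Fin n) (Fin n) ℝ) (d e b c : Fin n) : Pt n → ℝ := fun y =>
  pd b (christoffel g d c e) y - pd c (christoffel g d b e) y
    + ∑ m, (christoffel g d b m y * christoffel g m c e y
        - christoffel g d c m y * christoffel g m b e y)

theorem Rm_def (d e b c : Fin n) (x : Pt n) : Rm g d e b c x =
    pd b (christoffel g d c e) x - pd c (christoffel g d b e) x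
    + ∑ m, (christoffel g d b m x * christoffel g m c e x
        - christoffel g d c m x * christoffel g m b e x) := rfl

theorem smRm (hg : IsMetric g) (d e b c : Fin n) : Sm (Rm g d e b c) :=
  (((smGamma hg d c e).pd b).sub ((smGamma hg d b e).pd c)).add
    (Sm.sum fun m _ => ((smGamma hg d b m).mul (smGamma hg m c e)).sub
      ((smGamma hg d c m).mul (smGamma hg m b e)))

theorem Rm_anti (d e b c : Fin n) (x : Pt n) : Rm g d e b c x + Rm g d e c b x = 0 := by
  rw [Rm_def, Rm_def]
  have h : (∑ m, (christoffel g d b m x * christoffel g m c e x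
        - christoffel g d c m x * christoffel g m b e x))
      + ∑ m, (christoffel g d c m x * christoffel g m b e x
        - christoffel g d b m x * christoffel g m c e x) = 0 := by
    rw [← Finset.sum_add_distrib]
    exact Finset.sum_eq_zero fun m _ => by ring
  linarith [h]

theorem ricci_eq (g : Pt n → Matrix (Fin n) (Fin n) ℝ) (i j : Fin n) (x : Pt n) :
    ricci g i j x = ∑ k, Rm g k j k i x := by
  have h : ∀ k : Fin n, Rm g k j k i x
      = pd k (christoffel g k i j) x - pd i (christoffel g k k j) x
        + ((∑ m, christoffel g k k m x * christoffel g m i j x)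
          - ∑ m, christoffel g k i m x * christoffel g m k j x) := by
    intro k
    rw [Rm_def, Finset.sum_sub_distrib]
  rw [Finset.sum_congr rfl fun k _ => h k]
  show (∑ k, pd k (christoffel g k i j) x) - (∑ k, pd i (christoffel g k k j) x)
      + (∑ k, ∑ l, christoffel g k k l x * christoffel g l i j x)
      - (∑ k, ∑ l, christoffel g k i l x * christoffel g l k j x) = _
  rw [Finset.sum_add_distrib, Finset.sum_sub_distrib, Finset.sum_sub_distrib]
  ring

theorem smRic (hg : IsMetric g) (i j : Fin n) : Sm (ricci g i j) :=
  (((Sm.sum fun k _ => (smGamma hg k i j).pd k).sub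
      (Sm.sum fun k _ => (smGamma hg k k j).pd i)).add
    (Sm.sum fun k _ => Sm.sum fun l _ => (smGamma hg k k l).mul (smGamma hg l i j))).sub
    (Sm.sum fun k _ => Sm.sum fun l _ => (smGamma hg k i l).mul (smGamma hg l k j))

/-- All-lower Riemann tensor. -/
def Rlow (g : Pt n → Matrix (Fin n) (Fin n) ℝ) (d e b c : Fin n) : Pt n → ℝ := fun y =>
  ∑ k, Gm g d k y * Rm g k e b c y

theorem raiseRm (hg : IsMetric g) (d e b c : Fin n) (x : Pt n) :
    Rm g d e b c x = ∑ m, Bm g d m x * Rlow g m e b c x := by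
  calc Rm g d e b c x
      = ∑ k, (if d = k then (1:ℝ) else 0) * Rm g k e b c x :=
        (sum_delta_mul d (fun k => Rm g k e b c x)).symm
    _ = ∑ k, (∑ m, Bm g d m x * Gm g m k x) * Rm g k e b c x :=
        Finset.sum_congr rfl fun k _ => by rw [BG hg d k x]
    _ = ∑ k, ∑ m, Bm g d m x * (Gm g m k x * Rm g k e b c x) := by
        refine Finset.sum_congr rfl fun k _ => ?_
        rw [Finset.sum_mul]
        exact Finset.sum_congr rfl fun m _ => by ring
    _ = ∑ m, ∑ k, Bm g d m x * (Gm g m k x * Rm g k e b c x) := Finset.sum_comm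
    _ = ∑ m, Bm g d m x * Rlow g m e b c x :=
        Finset.sum_congr rfl fun m _ => (Finset.mul_sum _ _ _).symm

theorem sum_antisym_zero {W : Fin n → Fin n → ℝ} (h : ∀ k m, W k m + W m k = 0) :
    ∑ k, ∑ m, W k m = 0 := by
  have h2 : (∑ k, ∑ m, W k m) + (∑ k, ∑ m, W m k) = 0 := by
    rw [← Finset.sum_add_distrib]
    refine Finset.sum_eq_zero fun k _ => ?_
    rw [← Finset.sum_add_distrib]
    exact Finset.sum_eq_zero fun m _ => h k m
  have h3 : (∑ k, ∑ m, W m k) = ∑ k, ∑ m, W k m := Finset.sum_comm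
  linarith [h2, h3]

theorem sumGpdGamma (hg : IsMetric g) (d c e b : Fin n) (x : Pt n) :
    ∑ k, Gm g d k x * pd b (christoffel g k c e) x
      = pd b (Gl g d c e) x
        - ∑ k, (Gl g d b k x + Gl g k b d x) * christoffel g k c e x := by
  have h1 : ∀ k : Fin n, Gm g d k x * pd b (christoffel g k c e) x
      = pd b (fun y => Gm g d k y * christoffel g k c e y) x
        - pd b (Gm g d k) x * christoffel g k c e x := fun k => by
    rw [pd_mul (smG hg d k) (smGamma hg k c e)]; ring
  rw [Finset.sum_congr rfl fun k _ => h1 k, Finset.sum_sub_distrib]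
  congr 1
  · calc ∑ k, pd b (fun y => Gm g d k y * christoffel g k c e y) x
        = pd b (fun y => ∑ k, Gm g d k y * christoffel g k c e y) x :=
          (pd_sum _ (fun k => (smG hg d k).mul (smGamma hg k c e)) b x).symm
      _ = pd b (Gl g d c e) x := by
          rw [show (fun y => ∑ k, Gm g d k y * christoffel g k c e y) = Gl g d c e from
            funext (lowerGamma hg d c e)]
  · exact Finset.sum_congr rfl fun k _ => by rw [pdG hg b d k x]

theorem sumGGammaGamma (hg : IsMetric g) (d b c e : Fin n) (x : Pt n) :
    ∑ k, ∑ m, Gm g d k x * christoffel g k b m x * christoffel g m c e x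
      = ∑ m, Gl g d b m x * christoffel g m c e x := by
  rw [Finset.sum_comm]
  refine Finset.sum_congr rfl fun m _ => ?_
  rw [← lowerGamma hg d b m x, Finset.sum_mul]

theorem RlowF (hg : IsMetric g) (d e b c : Fin n) (x : Pt n) :
    Rlow g d e b c x
      = pd b (Gl g d c e) x - pd c (Gl g d b e) x
        - (∑ k, Gl g k b d x * christoffel g k c e x)
        + ∑ k, Gl g k c d x * christoffel g k b e x := by
  have h1 : ∀ k : Fin n, Gm g d k x * Rm g k e b c x
      = Gm g d k x * pd b (christoffel g k c e) x
        - Gm g d k x * pd c (christoffel g k b e) x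
        + ((∑ m, Gm g d k x * christoffel g k b m x * christoffel g m c e x)
          - ∑ m, Gm g d k x * christoffel g k c m x * christoffel g m b e x) := by
    intro k
    rw [Rm_def, mul_add, Finset.mul_sum]
    congr 1
    · ring
    · rw [← Finset.sum_sub_distrib]
      exact Finset.sum_congr rfl fun m _ => by ring
  have hexp : Rlow g d e b c x
      = (∑ k, Gm g d k x * pd b (christoffel g k c e) x)
        - (∑ k, Gm g d k x * pd c (christoffel g k b e) x)
        + ((∑ k, ∑ m, Gm g d k x * christoffel g k b m x * christoffel g m c e x)
          - ∑ k, ∑ m, Gm g d k x * christoffel g k c m x * christoffel g m b e x) := by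
    show ∑ k, Gm g d k x * Rm g k e b c x = _
    rw [Finset.sum_congr rfl fun k _ => h1 k, Finset.sum_add_distrib,
      Finset.sum_sub_distrib, Finset.sum_sub_distrib]
  have hsplit : ∀ (u v w : Fin n),
      ∑ k, (Gl g d u k x + Gl g k u d x) * christoffel g k v w x
        = (∑ k, Gl g d u k x * christoffel g k v w x)
          + ∑ k, Gl g k u d x * christoffel g k v w x := by
    intro u v w
    rw [← Finset.sum_add_distrib]
    exact Finset.sum_congr rfl fun k _ => by ring
  rw [hexp, sumGpdGamma hg d c e b x, sumGpdGamma hg d b e c x,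
    sumGGammaGamma hg d b c e x, sumGGammaGamma hg d c b e x, hsplit, hsplit]
  ring

end Curvature

section Curvature2

variable {n : ℕ} {g : Pt n → Matrix (Fin n) (Fin n) ℝ}

theorem sum_split4 {A B C D : Fin n → ℝ} :
    ∑ k, (-A k + B k - C k + D k)
      = -(∑ k, A k) + (∑ k, B k) - (∑ k, C k) + ∑ k, D k := by
  rw [Finset.sum_add_distrib, Finset.sum_sub_distrib, Finset.sum_add_distrib,
    Finset.sum_neg_distrib]

theorem GlGamma_expand (hg : IsMetric g) (u v w z : Fin n) (x : Pt n) :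
    ∑ k, Gl g k u v x * christoffel g k w z x
      = ∑ k, ∑ m, Gm g k m x * christoffel g m u v x * christoffel g k w z x := by
  refine Finset.sum_congr rfl fun k _ => ?_
  rw [← lowerGamma hg k u v x, Finset.sum_mul]

theorem Rlow_anti1 (hg : IsMetric g) (d e b c : Fin n) (x : Pt n) :
    Rlow g d e b c x + Rlow g e d b c x = 0 := by
  rw [RlowF hg d e b c x, RlowF hg e d b c x]
  have hb : pd b (Gl g d c e) x + pd b (Gl g e c d) x = pd b (pd c (Gm g d e)) x := by
    rw [← pd_add (smGl hg d c e) (smGl hg e c d)]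
    congr 1
    funext y
    exact (pdG hg c d e y).symm
  have hc : pd c (Gl g d b e) x + pd c (Gl g e b d) x = pd c (pd b (Gm g d e)) x := by
    rw [← pd_add (smGl hg d b e) (smGl hg e b d)]
    congr 1
    funext y
    exact (pdG hg b d e y).symm
  have hcomm : pd b (pd c (Gm g d e)) x = pd c (pd b (Gm g d e)) x :=
    pd_comm (smG hg d e) b c x
  have hW : ∑ k, ∑ m,
      (-(Gm g k m x * christoffel g m b d x * christoffel g k c e x)
        + Gm g k m x * christoffel g m c d x * christoffel g k b e x
        - Gm g k m x * christoffel g m b e x * christoffel g k c d x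
        + Gm g k m x * christoffel g m c e x * christoffel g k b d x) = 0 := by
    refine sum_antisym_zero fun k m => ?_
    have hgs : Gm g m k x = Gm g k m x := congrFun (G_symm hg m k) x
    rw [hgs]; ring
  have hsplitk : ∀ k : Fin n, ∑ m,
      (-(Gm g k m x * christoffel g m b d x * christoffel g k c e x)
        + Gm g k m x * christoffel g m c d x * christoffel g k b e x
        - Gm g k m x * christoffel g m b e x * christoffel g k c d x
        + Gm g k m x * christoffel g m c e x * christoffel g k b d x)
      = -(∑ m, Gm g k m x * christoffel g m b d x * christoffel g k c e x)
        + (∑ m, Gm g k m x * christoffel g m c d x * christoffel g k b e x)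
        - (∑ m, Gm g k m x * christoffel g m b e x * christoffel g k c d x)
        + ∑ m, Gm g k m x * christoffel g m c e x * christoffel g k b d x :=
    fun k => sum_split4
  rw [Finset.sum_congr rfl (fun k _ => hsplitk k), sum_split4] at hW
  rw [← GlGamma_expand hg b d c e x, ← GlGamma_expand hg c d b e x,
    ← GlGamma_expand hg b e c d x, ← GlGamma_expand hg c e b d x] at hW
  linarith [hb, hc, hcomm, hW]

theorem Rlow_anti2 (d e b c : Fin n) (x : Pt n) :
    Rlow g d e b c x + Rlow g d e c b x = 0 := by
  show (∑ k, Gm g d k x * Rm g k e b c x) + (∑ k, Gm g d k x * Rm g k e c b x) = 0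
  rw [← Finset.sum_add_distrib]
  exact Finset.sum_eq_zero fun k _ => by
    linear_combination (Gm g d k x) * Rm_anti k e b c x

theorem b1mixed (hg : IsMetric g) (d e b c : Fin n) (x : Pt n) :
    Rm g d e b c x + Rm g d b c e x + Rm g d c e b x = 0 := by
  rw [Rm_def, Rm_def, Rm_def]
  have hS : (∑ m, (christoffel g d b m x * christoffel g m c e x
        - christoffel g d c m x * christoffel g m b e x))
      + (∑ m, (christoffel g d c m x * christoffel g m e b x
        - christoffel g d e m x * christoffel g m c b x))
      + (∑ m, (christoffel g d e m x * christoffel g m b c x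
        - christoffel g d b m x * christoffel g m e c x)) = 0 := by
    rw [← Finset.sum_add_distrib, ← Finset.sum_add_distrib]
    refine Finset.sum_eq_zero fun m _ => ?_
    have h1 : christoffel g m c e x = christoffel g m e c x :=
      congrFun (Gamma_symm hg m c e) x
    have h2 : christoffel g m b e x = christoffel g m e b x :=
      congrFun (Gamma_symm hg m b e) x
    have h3 : christoffel g m c b x = christoffel g m b c x :=
      congrFun (Gamma_symm hg m c b) x
    linear_combination (christoffel g d b m x) * h1 - (christoffel g d c m x) * h2
      - (christoffel g d e m x) * h3
  have hp1 : pd c (christoffel g d e b) x = pd c (christoffel g d b e) x := by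
    rw [Gamma_symm hg d e b]
  have hp2 : pd e (christoffel g d c b) x = pd e (christoffel g d b c) x := by
    rw [Gamma_symm hg d c b]
  have hp3 : pd b (christoffel g d e c) x = pd b (christoffel g d c e) x := by
    rw [Gamma_symm hg d e c]
  linarith [hS, hp1, hp2, hp3]

theorem b1low (hg : IsMetric g) (d e b c : Fin n) (x : Pt n) :
    Rlow g d e b c x + Rlow g d b c e x + Rlow g d c e b x = 0 := by
  show (∑ k, Gm g d k x * Rm g k e b c x) + (∑ k, Gm g d k x * Rm g k b c e x)
      + (∑ k, Gm g d k x * Rm g k c e b x) = 0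
  rw [← Finset.sum_add_distrib, ← Finset.sum_add_distrib]
  exact Finset.sum_eq_zero fun k _ => by
    linear_combination (Gm g d k x) * b1mixed hg k e b c x

theorem pairSym (hg : IsMetric g) (d e b c : Fin n) (x : Pt n) :
    Rlow g d e b c x = Rlow g b c d e x := by
  have h1 := b1low hg d e b c x
  have h2 := b1low hg e b c d x
  have h3 := b1low hg b c d e x
  have h4 := b1low hg c d e b x
  have a1 : ∀ p q r s : Fin n, Rlow g p q r s x + Rlow g q p r s x = 0 :=
    fun p q r s => Rlow_anti1 hg p q r s x
  have a2 : ∀ p q r s : Fin n, Rlow g p q r s x + Rlow g p q s r x = 0 :=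
    fun p q r s => Rlow_anti2 p q r s x
  linarith [a1 d e b c, a1 d b c e, a1 d c e b, a1 e b c d, a1 e c d b, a1 e d b c,
    a1 b c d e, a1 b d e c, a1 b e c d, a1 c d e b, a1 c e b d, a1 c b d e,
    a2 d e b c, a2 d b c e, a2 d c e b, a2 e b c d, a2 e c d b, a2 e d b c,
    a2 b c d e, a2 b d e c, a2 b e c d, a2 c d e b, a2 c e b d, a2 c b d e]

end Curvature2

section Curvature3

variable {n : ℕ} {g : Pt n → Matrix (Fin n) (Fin n) ℝ}

theorem sum3_swap23 {f : Fin n → Fin n → Fin n → ℝ} :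
    ∑ a, ∑ b, ∑ c, f a b c = ∑ a, ∑ c, ∑ b, f a b c :=
  Finset.sum_congr rfl fun _ _ => Finset.sum_comm

theorem ricci_symm (hg : IsMetric g) (i j : Fin n) (x : Pt n) :
    ricci g i j x = ricci g j i x := by
  rw [ricci_eq, ricci_eq]
  calc ∑ k, Rm g k j k i x
      = ∑ k, ∑ m, Bm g k m x * Rlow g m j k i x :=
        Finset.sum_congr rfl fun k _ => raiseRm hg k j k i x
    _ = ∑ k, ∑ m, Bm g k m x * Rlow g k i m j x :=
        Finset.sum_congr rfl fun k _ => Finset.sum_congr rfl fun m _ => by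
          rw [pairSym hg m j k i x]
    _ = ∑ k, ∑ m, Bm g m k x * Rlow g m i k j x := Finset.sum_comm
    _ = ∑ k, ∑ m, Bm g k m x * Rlow g m i k j x :=
        Finset.sum_congr rfl fun k _ => Finset.sum_congr rfl fun m _ => by
          rw [congrFun (B_symm hg m k) x]
    _ = ∑ k, Rm g k i k j x :=
        Finset.sum_congr rfl fun k _ => (raiseRm hg k i k j x).symm

theorem ricci_symm_fun (hg : IsMetric g) (i j : Fin n) : ricci g i j = ricci g j i :=
  funext (ricci_symm hg i j)

theorem trBVinner (hg : IsMetric g) (m b : Fin n) (x : Pt n) :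
    ∑ e, ∑ c, Bm g e c x * Rlow g m e b c x = ricci g b m x := by
  calc ∑ e, ∑ c, Bm g e c x * Rlow g m e b c x
      = ∑ e, ∑ c, Bm g e c x * Rlow g e m c b x := by
        refine Finset.sum_congr rfl fun e _ => Finset.sum_congr rfl fun c _ => ?_
        have h : Rlow g m e b c x = Rlow g e m c b x := by
          linarith [Rlow_anti1 hg m e b c x, Rlow_anti2 (g := g) e m b c x]
        rw [h]
    _ = ∑ e, ∑ c, Bm g c e x * Rlow g c m e b x := Finset.sum_comm
    _ = ∑ e, ∑ c, Bm g e c x * Rlow g c m e b x :=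
        Finset.sum_congr rfl fun e _ => Finset.sum_congr rfl fun c _ => by
          rw [congrFun (B_symm hg c e) x]
    _ = ricci g b m x := by
        rw [ricci_eq]
        exact (Finset.sum_congr rfl fun k _ => raiseRm hg k m k b x).symm

theorem trBV (hg : IsMetric g) (d b : Fin n) (x : Pt n) :
    ∑ e, ∑ c, Bm g e c x * Rm g d e b c x = ∑ m, Bm g d m x * ricci g b m x := by
  calc ∑ e, ∑ c, Bm g e c x * Rm g d e b c x
      = ∑ e, ∑ c, ∑ m, Bm g d m x * (Bm g e c x * Rlow g m e b c x) := by
        refine Finset.sum_congr rfl fun e _ => Finset.sum_congr rfl fun c _ => ?_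
        rw [raiseRm hg d e b c x, Finset.mul_sum]
        exact Finset.sum_congr rfl fun m _ => by ring
    _ = ∑ e, ∑ m, ∑ c, Bm g d m x * (Bm g e c x * Rlow g m e b c x) := sum3_swap23
    _ = ∑ m, ∑ e, ∑ c, Bm g d m x * (Bm g e c x * Rlow g m e b c x) := Finset.sum_comm
    _ = ∑ m, Bm g d m x * ∑ e, ∑ c, Bm g e c x * Rlow g m e b c x := by
        refine Finset.sum_congr rfl fun m _ => ?_
        rw [Finset.mul_sum]
        exact Finset.sum_congr rfl fun e _ => (Finset.mul_sum _ _ _).symm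
    _ = ∑ m, Bm g d m x * ricci g b m x :=
        Finset.sum_congr rfl fun m _ => by rw [trBVinner hg m b x]

/-- Covariant derivative commutes with the full metric trace. -/
theorem traceCov2 (hg : IsMetric g) {T : Fin n → Fin n → Pt n → ℝ}
    (hT : ∀ i j, Sm (T i j)) (b : Fin n) (x : Pt n) :
    ∑ e, ∑ c, Bm g e c x * covDeriv2 g T b e c x
      = pd b (fun y => ∑ e, ∑ c, Bm g e c y * T e c y) x := by
  have hR : pd b (fun y => ∑ e, ∑ c, Bm g e c y * T e c y) x
      = ∑ e, ∑ c, (pd b (Bm g e c) x * T e c x + Bm g e c x * pd b (T e c) x) := by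
    rw [pd_sum _ (fun e => Sm.sum (fun c _ => (smB hg e c).mul (hT e c)))]
    refine Finset.sum_congr rfl fun e _ => ?_
    rw [pd_sum _ (fun c => (smB hg e c).mul (hT e c))]
    exact Finset.sum_congr rfl fun c _ => pd_mul (smB hg e c) (hT e c) b x
  have hL : ∀ e c : Fin n, Bm g e c x * covDeriv2 g T b e c x
      = Bm g e c x * pd b (T e c) x
        - (∑ d, Bm g e c x * (christoffel g d b e x * T d c x))
        - ∑ d, Bm g e c x * (christoffel g d b c x * T e d x) := by
    intro e c
    show Bm g e c x * (pd b (T e c) x - (∑ d, christoffel g d b e x * T d c x)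
        - ∑ d, christoffel g d b c x * T e d x) = _
    rw [mul_sub, mul_sub, Finset.mul_sum, Finset.mul_sum]
  have hsplitL : ∑ e, ∑ c, Bm g e c x * covDeriv2 g T b e c x
      = (∑ e, ∑ c, Bm g e c x * pd b (T e c) x)
        - (∑ e, ∑ c, ∑ d, Bm g e c x * (christoffel g d b e x * T d c x))
        - ∑ e, ∑ c, ∑ d, Bm g e c x * (christoffel g d b c x * T e d x) := by
    rw [Finset.sum_congr rfl fun e (_ : e ∈ Finset.univ) =>
      Finset.sum_congr rfl fun c _ => hL e c]
    rw [Finset.sum_congr rfl fun e (_ : e ∈ Finset.univ) => Finset.sum_sub_distrib _ _,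
      Finset.sum_sub_distrib]
    rw [Finset.sum_congr rfl fun e (_ : e ∈ Finset.univ) => Finset.sum_sub_distrib _ _,
      Finset.sum_sub_distrib]
  have hpdBsplit : ∑ e, ∑ c, pd b (Bm g e c) x * T e c x
      = -((∑ e, ∑ c, ∑ m, christoffel g e b m x * Bm g m c x * T e c x)
        + ∑ e, ∑ c, ∑ m, Bm g e m x * christoffel g c b m x * T e c x) := by
    have h1 : ∀ e c : Fin n, pd b (Bm g e c) x * T e c x
        = -((∑ m, christoffel g e b m x * Bm g m c x * T e c x)
          + ∑ m, Bm g e m x * christoffel g c b m x * T e c x) := by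
      intro e c
      rw [pdB hg b e c x]
      rw [neg_mul, Finset.sum_mul, neg_eq_iff_eq_neg, neg_neg]
      rw [← Finset.sum_add_distrib]
      exact Finset.sum_congr rfl fun m _ => by ring
    rw [Finset.sum_congr rfl fun e (_ : e ∈ Finset.univ) =>
      Finset.sum_congr rfl fun c _ => h1 e c]
    rw [Finset.sum_congr rfl fun e (_ : e ∈ Finset.univ) => Finset.sum_neg_distrib _,
      Finset.sum_neg_distrib]
    rw [Finset.sum_congr rfl fun e (_ : e ∈ Finset.univ) => Finset.sum_add_distrib,
      Finset.sum_add_distrib]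
  have hC1 : ∑ e, ∑ c, ∑ d, Bm g e c x * (christoffel g d b e x * T d c x)
      = ∑ e, ∑ c, ∑ m, christoffel g e b m x * Bm g m c x * T e c x := by
    calc ∑ e, ∑ c, ∑ d, Bm g e c x * (christoffel g d b e x * T d c x)
        = ∑ e, ∑ d, ∑ c, Bm g e c x * (christoffel g d b e x * T d c x) := sum3_swap23
      _ = ∑ d, ∑ e, ∑ c, Bm g e c x * (christoffel g d b e x * T d c x) := Finset.sum_comm
      _ = ∑ e, ∑ c, ∑ m, christoffel g e b m x * Bm g m c x * T e c x := by
        rw [sum3_swap23]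
        exact Finset.sum_congr rfl fun e _ => Finset.sum_congr rfl fun c _ =>
          Finset.sum_congr rfl fun m _ => by ring
  have hC2 : ∑ e, ∑ c, ∑ d, Bm g e c x * (christoffel g d b c x * T e d x)
      = ∑ e, ∑ c, ∑ m, Bm g e m x * christoffel g c b m x * T e c x := by
    calc ∑ e, ∑ c, ∑ d, Bm g e c x * (christoffel g d b c x * T e d x)
        = ∑ e, ∑ d, ∑ c, Bm g e c x * (christoffel g d b c x * T e d x) := sum3_swap23
      _ = ∑ e, ∑ c, ∑ m, Bm g e m x * christoffel g c b m x * T e c x :=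
        Finset.sum_congr rfl fun e _ => Finset.sum_congr rfl fun c _ =>
          Finset.sum_congr rfl fun m _ => by ring
  rw [hsplitL, hR]
  rw [Finset.sum_congr rfl fun e (_ : e ∈ Finset.univ) => Finset.sum_add_distrib,
    Finset.sum_add_distrib]
  rw [hpdBsplit, hC1, hC2]
  ring

end Curvature3

section Bianchi

variable {n : ℕ} {g : Pt n → Matrix (Fin n) (Fin n) ℝ}

/-- Covariant derivative `∇_a Rm^d_{e b c}` of the (1,3) curvature tensor. -/
def covRm (g : Pt n → Matrix (Fin n) (Fin n) ℝ) (a d e b c : Fin n) (x : Pt n) : ℝ :=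
  pd a (Rm g d e b c) x + (∑ m, christoffel g d a m x * Rm g m e b c x)
    - (∑ m, christoffel g m a e x * Rm g d m b c x)
    - (∑ m, christoffel g m a b x * Rm g d e m c x)
    - ∑ m, christoffel g m a c x * Rm g d e b m x

theorem pdRm (hg : IsMetric g) (a d e b c : Fin n) (x : Pt n) :
    pd a (Rm g d e b c) x
      = pd a (pd b (christoffel g d c e)) x - pd a (pd c (christoffel g d b e)) x
        + ∑ m, (pd a (christoffel g d b m) x * christoffel g m c e x
            + christoffel g d b m x * pd a (christoffel g m c e) x
            - pd a (christoffel g d c m) x * christoffel g m b e x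
            - christoffel g d c m x * pd a (christoffel g m b e) x) := by
  have h0 : pd a (Rm g d e b c) x
      = pd a (fun y => pd b (christoffel g d c e) y - pd c (christoffel g d b e) y) x
        + pd a (fun y => ∑ m, (christoffel g d b m y * christoffel g m c e y
            - christoffel g d c m y * christoffel g m b e y)) x :=
    pd_add (((smGamma hg d c e).pd b).sub ((smGamma hg d b e).pd c))
      (Sm.sum fun m _ => ((smGamma hg d b m).mul (smGamma hg m c e)).sub
        ((smGamma hg d c m).mul (smGamma hg m b e))) a x
  rw [h0, pd_sub ((smGamma hg d c e).pd b) ((smGamma hg d b e).pd c),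
    pd_sum _ (fun m => ((smGamma hg d b m).mul (smGamma hg m c e)).sub
      ((smGamma hg d c m).mul (smGamma hg m b e)))]
  congr 1
  refine Finset.sum_congr rfl fun m _ => ?_
  rw [pd_sub ((smGamma hg d b m).mul (smGamma hg m c e))
      ((smGamma hg d c m).mul (smGamma hg m b e)),
    pd_mul (smGamma hg d b m) (smGamma hg m c e),
    pd_mul (smGamma hg d c m) (smGamma hg m b e)]
  ring

theorem GRm_expand (hg : IsMetric g) (a d e b c : Fin n) (x : Pt n) :
    ∑ m, christoffel g d a m x * Rm g m e b c x
      = (∑ m, christoffel g d a m x * pd b (christoffel g m c e) x)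
        - (∑ m, christoffel g d a m x * pd c (christoffel g m b e) x)
        + ∑ m, ∑ p, (christoffel g d a m x * (christoffel g m b p x * christoffel g p c e x)
            - christoffel g d a m x * (christoffel g m c p x * christoffel g p b e x)) := by
  have h1 : ∀ m : Fin n, christoffel g d a m x * Rm g m e b c x
      = christoffel g d a m x * pd b (christoffel g m c e) x
        - christoffel g d a m x * pd c (christoffel g m b e) x
        + ∑ p, (christoffel g d a m x * (christoffel g m b p x * christoffel g p c e x)
            - christoffel g d a m x * (christoffel g m c p x * christoffel g p b e x)) := by
    intro m
    rw [Rm_def, mul_add, Finset.mul_sum]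
    congr 1
    · ring
    · exact Finset.sum_congr rfl fun p _ => by ring
  rw [Finset.sum_congr rfl fun m _ => h1 m, Finset.sum_add_distrib, Finset.sum_sub_distrib]

theorem GRm_expand2 (hg : IsMetric g) (a d e b c : Fin n) (x : Pt n) :
    ∑ m, christoffel g m a e x * Rm g d m b c x
      = (∑ m, christoffel g m a e x * pd b (christoffel g d c m) x)
        - (∑ m, christoffel g m a e x * pd c (christoffel g d b m) x)
        + ∑ m, ∑ p, (christoffel g m a e x * (christoffel g d b p x * christoffel g p c m x)
            - christoffel g m a e x * (christoffel g d c p x * christoffel g p b m x)) := by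
  have h1 : ∀ m : Fin n, christoffel g m a e x * Rm g d m b c x
      = christoffel g m a e x * pd b (christoffel g d c m) x
        - christoffel g m a e x * pd c (christoffel g d b m) x
        + ∑ p, (christoffel g m a e x * (christoffel g d b p x * christoffel g p c m x)
            - christoffel g m a e x * (christoffel g d c p x * christoffel g p b m x)) := by
    intro m
    rw [Rm_def, mul_add, Finset.mul_sum]
    congr 1
    · ring
    · exact Finset.sum_congr rfl fun p _ => by ring
  rw [Finset.sum_congr rfl fun m _ => h1 m, Finset.sum_add_distrib, Finset.sum_sub_distrib]

theorem covRm_expand (hg : IsMetric g) (a b c d e : Fin n) (x : Pt n) :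
    covRm g a d e b c x
      = (pd a (pd b (christoffel g d c e)) x - pd a (pd c (christoffel g d b e)) x)
        + (∑ m, (pd a (christoffel g d b m) x * christoffel g m c e x + christoffel g d b m x * pd a (christoffel g m c e) x
        - pd a (christoffel g d c m) x * christoffel g m b e x - christoffel g d c m x * pd a (christoffel g m b e) x
        + christoffel g d a m x * pd b (christoffel g m c e) x - christoffel g d a m x * pd c (christoffel g m b e) x
        - christoffel g m a e x * pd b (christoffel g d c m) x + christoffel g m a e x * pd c (christoffel g d b m) x
        - christoffel g m a b x * Rm g d e m c x - christoffel g m a c x * Rm g d e b m x))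
        + ∑ m, ∑ p, (christoffel g d a m x * (christoffel g m b p x * christoffel g p c e x) - christoffel g d a m x * (christoffel g m c p x * christoffel g p b e x)
        - christoffel g m a e x * (christoffel g d b p x * christoffel g p c m x) + christoffel g m a e x * (christoffel g d c p x * christoffel g p b m x)) := by
  show pd a (Rm g d e b c) x + (∑ m, christoffel g d a m x * Rm g m e b c x)
      - (∑ m, christoffel g m a e x * Rm g d m b c x)
      - (∑ m, christoffel g m a b x * Rm g d e m c x)
      - (∑ m, christoffel g m a c x * Rm g d e b m x) = _
  rw [pdRm hg a d e b c x, GRm_expand hg a d e b c x, GRm_expand2 hg a d e b c x]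
  have hsplitP : ∑ m, (pd a (christoffel g d b m) x * christoffel g m c e x + christoffel g d b m x * pd a (christoffel g m c e) x
        - pd a (christoffel g d c m) x * christoffel g m b e x - christoffel g d c m x * pd a (christoffel g m b e) x
        + christoffel g d a m x * pd b (christoffel g m c e) x - christoffel g d a m x * pd c (christoffel g m b e) x
        - christoffel g m a e x * pd b (christoffel g d c m) x + christoffel g m a e x * pd c (christoffel g d b m) x
        - christoffel g m a b x * Rm g d e m c x - christoffel g m a c x * Rm g d e b m x)
      = (∑ m, (pd a (christoffel g d b m) x * christoffel g m c e x
            + christoffel g d b m x * pd a (christoffel g m c e) x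
            - pd a (christoffel g d c m) x * christoffel g m b e x
            - christoffel g d c m x * pd a (christoffel g m b e) x))
        + (∑ m, christoffel g d a m x * pd b (christoffel g m c e) x)
        - (∑ m, christoffel g d a m x * pd c (christoffel g m b e) x)
        - (∑ m, christoffel g m a e x * pd b (christoffel g d c m) x)
        + (∑ m, christoffel g m a e x * pd c (christoffel g d b m) x)
        - (∑ m, christoffel g m a b x * Rm g d e m c x)
        - (∑ m, christoffel g m a c x * Rm g d e b m x) := by
    rw [← Finset.sum_add_distrib, ← Finset.sum_sub_distrib, ← Finset.sum_sub_distrib,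
      ← Finset.sum_add_distrib, ← Finset.sum_sub_distrib, ← Finset.sum_sub_distrib]
    try exact Finset.sum_congr rfl fun m _ => by ring
  have hsplitQ : ∑ m, ∑ p, (christoffel g d a m x * (christoffel g m b p x * christoffel g p c e x) - christoffel g d a m x * (christoffel g m c p x * christoffel g p b e x)
        - christoffel g m a e x * (christoffel g d b p x * christoffel g p c m x) + christoffel g m a e x * (christoffel g d c p x * christoffel g p b m x))
      = (∑ m, ∑ p, (christoffel g d a m x * (christoffel g m b p x * christoffel g p c e x)
            - christoffel g d a m x * (christoffel g m c p x * christoffel g p b e x)))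
        - ∑ m, ∑ p, (christoffel g m a e x * (christoffel g d b p x * christoffel g p c m x)
            - christoffel g m a e x * (christoffel g d c p x * christoffel g p b m x)) := by
    rw [← Finset.sum_sub_distrib]
    refine Finset.sum_congr rfl fun m _ => ?_
    rw [← Finset.sum_sub_distrib]
    exact Finset.sum_congr rfl fun p _ => by ring
  rw [hsplitP, hsplitQ]
  ring

theorem bianchi2 (hg : IsMetric g) (a b c d e : Fin n) (x : Pt n) :
    covRm g a d e b c x + covRm g b d e c a x + covRm g c d e a b x = 0 := by
  rw [covRm_expand hg a b c d e x, covRm_expand hg b c a d e x,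
    covRm_expand hg c a b d e x]
  have hX0 : (pd a (pd b (christoffel g d c e)) x - pd a (pd c (christoffel g d b e)) x)
      + (pd b (pd c (christoffel g d a e)) x - pd b (pd a (christoffel g d c e)) x)
      + (pd c (pd a (christoffel g d b e)) x - pd c (pd b (christoffel g d a e)) x) = 0 := by
    linarith [pd_comm (smGamma hg d c e) a b x,
      pd_comm (smGamma hg d b e) a c x,
      pd_comm (smGamma hg d a e) b c x]
  have hP : (∑ m, (pd a (christoffel g d b m) x * christoffel g m c e x + christoffel g d b m x * pd a (christoffel g m c e) x
        - pd a (christoffel g d c m) x * christoffel g m b e x - christoffel g d c m x * pd a (christoffel g m b e) x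
        + christoffel g d a m x * pd b (christoffel g m c e) x - christoffel g d a m x * pd c (christoffel g m b e) x
        - christoffel g m a e x * pd b (christoffel g d c m) x + christoffel g m a e x * pd c (christoffel g d b m) x
        - christoffel g m a b x * Rm g d e m c x - christoffel g m a c x * Rm g d e b m x)) + (∑ m, (pd b (christoffel g d c m) x * christoffel g m a e x + christoffel g d c m x * pd b (christoffel g m a e) x
        - pd b (christoffel g d a m) x * christoffel g m c e x - christoffel g d a m x * pd b (christoffel g m c e) x
        + christoffel g d b m x * pd c (christoffel g m a e) x - christoffel g d b m x * pd a (christoffel g m c e) x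
        - christoffel g m b e x * pd c (christoffel g d a m) x + christoffel g m b e x * pd a (christoffel g d c m) x
        - christoffel g m b c x * Rm g d e m a x - christoffel g m b a x * Rm g d e c m x)) + (∑ m, (pd c (christoffel g d a m) x * christoffel g m b e x + christoffel g d a m x * pd c (christoffel g m b e) x
        - pd c (christoffel g d b m) x * christoffel g m a e x - christoffel g d b m x * pd c (christoffel g m a e) x
        + christoffel g d c m x * pd a (christoffel g m b e) x - christoffel g d c m x * pd b (christoffel g m a e) x
        - christoffel g m c e x * pd a (christoffel g d b m) x + christoffel g m c e x * pd b (christoffel g d a m) x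
        - christoffel g m c a x * Rm g d e m b x - christoffel g m c b x * Rm g d e a m x)) = 0 := by
    rw [← Finset.sum_add_distrib, ← Finset.sum_add_distrib]
    refine Finset.sum_eq_zero fun m _ => ?_
    have hR1 : Rm g d e m c x + Rm g d e c m x = 0 := Rm_anti d e m c x
    have hR2 : Rm g d e b m x + Rm g d e m b x = 0 := Rm_anti d e b m x
    have hR3 : Rm g d e m a x + Rm g d e a m x = 0 := Rm_anti d e m a x
    have hs1 : christoffel g m a b x = christoffel g m b a x :=
      congrFun (Gamma_symm hg m a b) x
    have hs2 : christoffel g m a c x = christoffel g m c a x :=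
      congrFun (Gamma_symm hg m a c) x
    have hs3 : christoffel g m b c x = christoffel g m c b x :=
      congrFun (Gamma_symm hg m b c) x
    linear_combination (-(christoffel g m a b x)) * hR1 + (-(christoffel g m a c x)) * hR2
      + (-(christoffel g m b c x)) * hR3 + (Rm g d e c m x) * hs1
      + (Rm g d e m b x) * hs2 + (Rm g d e a m x) * hs3
  have hQ : (∑ m, ∑ p, (christoffel g d a m x * (christoffel g m b p x * christoffel g p c e x) - christoffel g d a m x * (christoffel g m c p x * christoffel g p b e x)
        - christoffel g m a e x * (christoffel g d b p x * christoffel g p c m x) + christoffel g m a e x * (christoffel g d c p x * christoffel g p b m x))) + (∑ m, ∑ p, (christoffel g d b m x * (christoffel g m c p x * christoffel g p a e x) - christoffel g d b m x * (christoffel g m a p x * christoffel g p c e x)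
        - christoffel g m b e x * (christoffel g d c p x * christoffel g p a m x) + christoffel g m b e x * (christoffel g d a p x * christoffel g p c m x))) + (∑ m, ∑ p, (christoffel g d c m x * (christoffel g m a p x * christoffel g p b e x) - christoffel g d c m x * (christoffel g m b p x * christoffel g p a e x)
        - christoffel g m c e x * (christoffel g d a p x * christoffel g p b m x) + christoffel g m c e x * (christoffel g d b p x * christoffel g p a m x))) = 0 := by
    have hmerge : (∑ m, ∑ p, (christoffel g d a m x * (christoffel g m b p x * christoffel g p c e x) - christoffel g d a m x * (christoffel g m c p x * christoffel g p b e x)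
        - christoffel g m a e x * (christoffel g d b p x * christoffel g p c m x) + christoffel g m a e x * (christoffel g d c p x * christoffel g p b m x))) + (∑ m, ∑ p, (christoffel g d b m x * (christoffel g m c p x * christoffel g p a e x) - christoffel g d b m x * (christoffel g m a p x * christoffel g p c e x)
        - christoffel g m b e x * (christoffel g d c p x * christoffel g p a m x) + christoffel g m b e x * (christoffel g d a p x * christoffel g p c m x))) + (∑ m, ∑ p, (christoffel g d c m x * (christoffel g m a p x * christoffel g p b e x) - christoffel g d c m x * (christoffel g m b p x * christoffel g p a e x)
        - christoffel g m c e x * (christoffel g d a p x * christoffel g p b m x) + christoffel g m c e x * (christoffel g d b p x * christoffel g p a m x)))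
        = ∑ m, ∑ p, ((christoffel g d a m x * (christoffel g m b p x * christoffel g p c e x) - christoffel g d a m x * (christoffel g m c p x * christoffel g p b e x)
        - christoffel g m a e x * (christoffel g d b p x * christoffel g p c m x) + christoffel g m a e x * (christoffel g d c p x * christoffel g p b m x)) + (christoffel g d b m x * (christoffel g m c p x * christoffel g p a e x) - christoffel g d b m x * (christoffel g m a p x * christoffel g p c e x)
        - christoffel g m b e x * (christoffel g d c p x * christoffel g p a m x) + christoffel g m b e x * (christoffel g d a p x * christoffel g p c m x)) + (christoffel g d c m x * (christoffel g m a p x * christoffel g p b e x) - christoffel g d c m x * (christoffel g m b p x * christoffel g p a e x)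
        - christoffel g m c e x * (christoffel g d a p x * christoffel g p b m x) + christoffel g m c e x * (christoffel g d b p x * christoffel g p a m x))) := by
      rw [← Finset.sum_add_distrib, ← Finset.sum_add_distrib]
      refine Finset.sum_congr rfl fun m _ => ?_
      rw [← Finset.sum_add_distrib, ← Finset.sum_add_distrib]
    rw [hmerge]
    refine sum_antisym_zero fun m p => ?_
    ring
  linarith [hX0, hP, hQ]

end Bianchi

section Contraction

variable {n : ℕ} {g : Pt n → Matrix (Fin n) (Fin n) ℝ}

theorem sum3_swap13 {f : Fin n → Fin n → Fin n → ℝ} :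
    ∑ a, ∑ b, ∑ c, f a b c = ∑ a, ∑ b, ∑ c, f c b a := by
  calc ∑ a, ∑ b, ∑ c, f a b c
      = ∑ a, ∑ c, ∑ b, f a b c := Finset.sum_congr rfl fun a _ => Finset.sum_comm
    _ = ∑ c, ∑ a, ∑ b, f a b c := Finset.sum_comm
    _ = ∑ c, ∑ b, ∑ a, f a b c := Finset.sum_congr rfl fun c _ => Finset.sum_comm

theorem sum3_front {f : Fin n → Fin n → Fin n → ℝ} :
    ∑ a, ∑ b, ∑ c, f a b c = ∑ c, ∑ a, ∑ b, f a b c := by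
  calc ∑ a, ∑ b, ∑ c, f a b c
      = ∑ a, ∑ c, ∑ b, f a b c := Finset.sum_congr rfl fun a _ => Finset.sum_comm
    _ = ∑ c, ∑ a, ∑ b, f a b c := Finset.sum_comm

theorem sum4_swap14 {f : Fin n → Fin n → Fin n → Fin n → ℝ} :
    ∑ a, ∑ b, ∑ c, ∑ d, f a b c d = ∑ a, ∑ b, ∑ c, ∑ d, f d b c a := by
  calc ∑ a, ∑ b, ∑ c, ∑ d, f a b c d
      = ∑ a, ∑ b, ∑ d, ∑ c, f a b c d :=
        Finset.sum_congr rfl fun a _ => Finset.sum_congr rfl fun b _ => Finset.sum_comm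
    _ = ∑ a, ∑ d, ∑ b, ∑ c, f a b c d := Finset.sum_congr rfl fun a _ => Finset.sum_comm
    _ = ∑ d, ∑ a, ∑ b, ∑ c, f a b c d := Finset.sum_comm
    _ = ∑ d, ∑ b, ∑ a, ∑ c, f a b c d := Finset.sum_congr rfl fun d _ => Finset.sum_comm
    _ = ∑ d, ∑ b, ∑ c, ∑ a, f a b c d :=
        Finset.sum_congr rfl fun d _ => Finset.sum_congr rfl fun b _ => Finset.sum_comm

theorem sum4_swap24 {f : Fin n → Fin n → Fin n → Fin n → ℝ} :
    ∑ a, ∑ b, ∑ c, ∑ d, f a b c d = ∑ a, ∑ b, ∑ c, ∑ d, f a d c b :=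
  Finset.sum_congr rfl fun a _ => sum3_swap13

theorem sum4_block {f : Fin n → Fin n → Fin n → Fin n → ℝ} :
    ∑ a, ∑ b, ∑ c, ∑ d, f a b c d = ∑ c, ∑ d, ∑ a, ∑ b, f a b c d := by
  calc ∑ a, ∑ b, ∑ c, ∑ d, f a b c d
      = ∑ a, ∑ c, ∑ b, ∑ d, f a b c d := Finset.sum_congr rfl fun a _ => Finset.sum_comm
    _ = ∑ a, ∑ c, ∑ d, ∑ b, f a b c d :=
        Finset.sum_congr rfl fun a _ => Finset.sum_congr rfl fun c _ => Finset.sum_comm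
    _ = ∑ c, ∑ a, ∑ d, ∑ b, f a b c d := Finset.sum_comm
    _ = ∑ c, ∑ d, ∑ a, ∑ b, f a b c d := Finset.sum_congr rfl fun c _ => Finset.sum_comm

theorem tauRm (hg : IsMetric g) (u v : Fin n) (y : Pt n) :
    ∑ d, Rm g d u v d y = -(ricci g v u y) := by
  calc ∑ d, Rm g d u v d y
      = ∑ d, -(Rm g d u d v y) := Finset.sum_congr rfl fun d _ => by
        linarith [Rm_anti (g := g) d u d v y]
    _ = -∑ d, Rm g d u d v y := Finset.sum_neg_distrib _
    _ = -(ricci g v u y) := by rw [← ricci_eq]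

theorem sigmaRm (u v : Fin n) (y : Pt n) :
    ∑ d, Rm g d u d v y = ricci g v u y := (ricci_eq g v u y).symm

theorem divTrace1 (hg : IsMetric g) (e b c : Fin n) (x : Pt n) :
    ∑ d, covRm g b d e c d x
      = -(covDeriv2 g (fun p q => ricci g p q) b e c x) := by
  have hexp : ∑ d, covRm g b d e c d x
      = (∑ d, pd b (Rm g d e c d) x)
        + (∑ d, ∑ m, christoffel g d b m x * Rm g m e c d x)
        - (∑ d, ∑ m, christoffel g m b e x * Rm g d m c d x)
        - (∑ d, ∑ m, christoffel g m b c x * Rm g d e m d x)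
        - ∑ d, ∑ m, christoffel g m b d x * Rm g d e c m x := by
    show ∑ d, (pd b (Rm g d e c d) x + (∑ m, christoffel g d b m x * Rm g m e c d x)
        - (∑ m, christoffel g m b e x * Rm g d m c d x)
        - (∑ m, christoffel g m b c x * Rm g d e m d x)
        - ∑ m, christoffel g m b d x * Rm g d e c m x) = _
    rw [Finset.sum_sub_distrib, Finset.sum_sub_distrib, Finset.sum_sub_distrib,
      Finset.sum_add_distrib]
  have hcancel : ∑ d, ∑ m, christoffel g m b d x * Rm g d e c m x
      = ∑ d, ∑ m, christoffel g d b m x * Rm g m e c d x := Finset.sum_comm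
  have hA : ∑ d, pd b (Rm g d e c d) x = -(pd b (ricci g c e) x) := by
    calc ∑ d, pd b (Rm g d e c d) x
        = pd b (fun y => ∑ d, Rm g d e c d y) x :=
          (pd_sum _ (fun d => smRm hg d e c d) b x).symm
      _ = pd b (fun y => -(ricci g c e y)) x := by
          rw [show (fun y => ∑ d, Rm g d e c d y) = fun y => -(ricci g c e y) from
            funext fun y => tauRm hg e c y]
      _ = -(pd b (ricci g c e) x) := pd_neg b x
  have hC : ∑ d, ∑ m, christoffel g m b e x * Rm g d m c d x
      = -∑ m, christoffel g m b e x * ricci g c m x := by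
    rw [Finset.sum_comm]
    rw [← Finset.sum_neg_distrib]
    refine Finset.sum_congr rfl fun m _ => ?_
    rw [← Finset.mul_sum, tauRm hg m c x]
    ring
  have hD : ∑ d, ∑ m, christoffel g m b c x * Rm g d e m d x
      = -∑ m, christoffel g m b c x * ricci g m e x := by
    rw [Finset.sum_comm]
    rw [← Finset.sum_neg_distrib]
    refine Finset.sum_congr rfl fun m _ => ?_
    rw [← Finset.mul_sum, tauRm hg e m x]
    ring
  have hRHS : covDeriv2 g (fun p q => ricci g p q) b e c x
      = pd b (ricci g c e) x - (∑ m, christoffel g m b e x * ricci g c m x)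
        - ∑ m, christoffel g m b c x * ricci g m e x := by
    show pd b (fun y => ricci g e c y) x
        - (∑ m, christoffel g m b e x * ricci g m c x)
        - (∑ m, christoffel g m b c x * ricci g e m x) = _
    rw [show (fun y => ricci g e c y) = ricci g c e from ricci_symm_fun hg e c]
    rw [show ∑ m, christoffel g m b e x * ricci g m c x
        = ∑ m, christoffel g m b e x * ricci g c m x from
      Finset.sum_congr rfl fun m _ => by rw [ricci_symm hg m c x]]
    rw [show ∑ m, christoffel g m b c x * ricci g e m x
        = ∑ m, christoffel g m b c x * ricci g m e x from
      Finset.sum_congr rfl fun m _ => by rw [ricci_symm hg e m x]]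
  rw [hexp, hcancel, hA, hC, hD, hRHS]
  ring

theorem divTrace2 (hg : IsMetric g) (e b c : Fin n) (x : Pt n) :
    ∑ d, covRm g c d e d b x
      = covDeriv2 g (fun p q => ricci g p q) c e b x := by
  have hexp : ∑ d, covRm g c d e d b x
      = (∑ d, pd c (Rm g d e d b) x)
        + (∑ d, ∑ m, christoffel g d c m x * Rm g m e d b x)
        - (∑ d, ∑ m, christoffel g m c e x * Rm g d m d b x)
        - (∑ d, ∑ m, christoffel g m c d x * Rm g d e m b x)
        - ∑ d, ∑ m, christoffel g m c b x * Rm g d e d m x := by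
    show ∑ d, (pd c (Rm g d e d b) x + (∑ m, christoffel g d c m x * Rm g m e d b x)
        - (∑ m, christoffel g m c e x * Rm g d m d b x)
        - (∑ m, christoffel g m c d x * Rm g d e m b x)
        - ∑ m, christoffel g m c b x * Rm g d e d m x) = _
    rw [Finset.sum_sub_distrib, Finset.sum_sub_distrib, Finset.sum_sub_distrib,
      Finset.sum_add_distrib]
  have hcancel : ∑ d, ∑ m, christoffel g m c d x * Rm g d e m b x
      = ∑ d, ∑ m, christoffel g d c m x * Rm g m e d b x := Finset.sum_comm
  have hA : ∑ d, pd c (Rm g d e d b) x = pd c (ricci g b e) x := by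
    calc ∑ d, pd c (Rm g d e d b) x
        = pd c (fun y => ∑ d, Rm g d e d b y) x :=
          (pd_sum _ (fun d => smRm hg d e d b) c x).symm
      _ = pd c (ricci g b e) x := by
          rw [show (fun y => ∑ d, Rm g d e d b y) = ricci g b e from
            funext fun y => (sigmaRm e b y)]
  have hC : ∑ d, ∑ m, christoffel g m c e x * Rm g d m d b x
      = ∑ m, christoffel g m c e x * ricci g b m x := by
    rw [Finset.sum_comm]
    refine Finset.sum_congr rfl fun m _ => ?_
    rw [← Finset.mul_sum, sigmaRm m b x]
  have hE : ∑ d, ∑ m, christoffel g m c b x * Rm g d e d m x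
      = ∑ m, christoffel g m c b x * ricci g m e x := by
    rw [Finset.sum_comm]
    refine Finset.sum_congr rfl fun m _ => ?_
    rw [← Finset.mul_sum, sigmaRm e m x]
  have hRHS : covDeriv2 g (fun p q => ricci g p q) c e b x
      = pd c (ricci g b e) x - (∑ m, christoffel g m c e x * ricci g b m x)
        - ∑ m, christoffel g m c b x * ricci g m e x := by
    show pd c (fun y => ricci g e b y) x
        - (∑ m, christoffel g m c e x * ricci g m b x)
        - (∑ m, christoffel g m c b x * ricci g e m x) = _
    rw [show (fun y => ricci g e b y) = ricci g b e from ricci_symm_fun hg e b]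
    rw [show ∑ m, christoffel g m c e x * ricci g m b x
        = ∑ m, christoffel g m c e x * ricci g b m x from
      Finset.sum_congr rfl fun m _ => by rw [ricci_symm hg m b x]]
    rw [show ∑ m, christoffel g m c b x * ricci g e m x
        = ∑ m, christoffel g m c b x * ricci g m e x from
      Finset.sum_congr rfl fun m _ => by rw [ricci_symm hg e m x]]
  rw [hexp, hcancel, hA, hC, hE, hRHS]
  ring

/-- once-contracted second Bianchi identity -/
theorem contrBianchi (hg : IsMetric g) (e b c : Fin n) (x : Pt n) :
    ∑ d, covRm g d d e b c x
      = covDeriv2 g (fun p q => ricci g p q) b e c x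
        - covDeriv2 g (fun p q => ricci g p q) c e b x := by
  have hsum : ∑ d, (covRm g d d e b c x + covRm g b d e c d x + covRm g c d e d b x)
      = 0 := Finset.sum_eq_zero fun d _ => bianchi2 hg d b c d e x
  rw [Finset.sum_add_distrib, Finset.sum_add_distrib] at hsum
  rw [divTrace1 hg e b c x, divTrace2 hg e b c x] at hsum
  linarith [hsum]

end Contraction

section DivRic

variable {n : ℕ} {g : Pt n → Matrix (Fin n) (Fin n) ℝ}

theorem sum_split_add3 {A B C : Fin n → ℝ} :
    ∑ k, (A k + (B k + C k)) = (∑ k, A k) + ((∑ k, B k) + ∑ k, C k) := by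
  rw [Finset.sum_add_distrib, Finset.sum_add_distrib]

theorem Tlemma (hg : IsMetric g) (b : Fin n) (x : Pt n) :
    ∑ e, ∑ c, Bm g e c x * (∑ d, covRm g d d e b c x)
      = ∑ a, ∑ c, Bm g a c x * covDeriv2 g (fun p q => ricci g p q) c a b x := by
  -- expand the left side into five canonical sums
  have hinner : ∀ e c : Fin n, Bm g e c x * (∑ d, covRm g d d e b c x)
      = (∑ d, Bm g e c x * pd d (Rm g d e b c) x)
        + (∑ d, ∑ m, Bm g e c x * (christoffel g d d m x * Rm g m e b c x))
        - (∑ d, ∑ m, Bm g e c x * (christoffel g m d e x * Rm g d m b c x))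
        - (∑ d, ∑ m, Bm g e c x * (christoffel g m d b x * Rm g d e m c x))
        - ∑ d, ∑ m, Bm g e c x * (christoffel g m d c x * Rm g d e b m x) := by
    intro e c
    have hd : ∀ d : Fin n, Bm g e c x * covRm g d d e b c x
        = Bm g e c x * pd d (Rm g d e b c) x
          + (∑ m, Bm g e c x * (christoffel g d d m x * Rm g m e b c x))
          - (∑ m, Bm g e c x * (christoffel g m d e x * Rm g d m b c x))
          - (∑ m, Bm g e c x * (christoffel g m d b x * Rm g d e m c x))
          - ∑ m, Bm g e c x * (christoffel g m d c x * Rm g d e b m x) := by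
      intro d
      show Bm g e c x * (pd d (Rm g d e b c) x
          + (∑ m, christoffel g d d m x * Rm g m e b c x)
          - (∑ m, christoffel g m d e x * Rm g d m b c x)
          - (∑ m, christoffel g m d b x * Rm g d e m c x)
          - ∑ m, christoffel g m d c x * Rm g d e b m x) = _
      rw [mul_sub, mul_sub, mul_sub, mul_add, Finset.mul_sum, Finset.mul_sum,
        Finset.mul_sum, Finset.mul_sum]
    rw [Finset.mul_sum, Finset.sum_congr rfl fun d _ => hd d, Finset.sum_sub_distrib,
      Finset.sum_sub_distrib, Finset.sum_sub_distrib, Finset.sum_add_distrib]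
  have hL : ∑ e, ∑ c, Bm g e c x * (∑ d, covRm g d d e b c x)
      = (∑ e, ∑ c, ∑ d, Bm g e c x * pd d (Rm g d e b c) x)
        + (∑ e, ∑ c, ∑ d, ∑ m, Bm g e c x * (christoffel g d d m x * Rm g m e b c x))
        - (∑ e, ∑ c, ∑ d, ∑ m, Bm g e c x * (christoffel g m d e x * Rm g d m b c x))
        - (∑ e, ∑ c, ∑ d, ∑ m, Bm g e c x * (christoffel g m d b x * Rm g d e m c x))
        - ∑ e, ∑ c, ∑ d, ∑ m, Bm g e c x * (christoffel g m d c x * Rm g d e b m x) := by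
    rw [Finset.sum_congr rfl fun e (_ : e ∈ Finset.univ) =>
      Finset.sum_congr rfl fun c _ => hinner e c]
    rw [Finset.sum_congr rfl fun e (_ : e ∈ Finset.univ) => Finset.sum_sub_distrib _ _,
      Finset.sum_sub_distrib]
    rw [Finset.sum_congr rfl fun e (_ : e ∈ Finset.univ) => Finset.sum_sub_distrib _ _,
      Finset.sum_sub_distrib]
    rw [Finset.sum_congr rfl fun e (_ : e ∈ Finset.univ) => Finset.sum_sub_distrib _ _,
      Finset.sum_sub_distrib]
    rw [Finset.sum_congr rfl fun e (_ : e ∈ Finset.univ) => Finset.sum_add_distrib,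
      Finset.sum_add_distrib]
  -- product rule on the divergence term
  have hprod : ∀ e c d : Fin n, Bm g e c x * pd d (Rm g d e b c) x
      = pd d (fun y => Bm g e c y * Rm g d e b c y) x
        + ((∑ m, christoffel g e d m x * Bm g m c x * Rm g d e b c x)
          + ∑ m, Bm g e m x * christoffel g c d m x * Rm g d e b c x) := by
    intro e c d
    have hm := pd_mul (smB hg e c) (smRm hg d e b c) d x
    have hb := pdB hg d e c x
    have h1 : Bm g e c x * pd d (Rm g d e b c) x
        = pd d (fun y => Bm g e c y * Rm g d e b c y) x
          - pd d (Bm g e c) x * Rm g d e b c x := by rw [hm]; ring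
    rw [h1, hb, neg_mul, sub_neg_eq_add, Finset.sum_mul]
    congr 1
    rw [← Finset.sum_add_distrib]
    exact Finset.sum_congr rfl fun m _ => by ring
  have hT1 : ∑ e, ∑ c, ∑ d, Bm g e c x * pd d (Rm g d e b c) x
      = (∑ e, ∑ c, ∑ d, pd d (fun y => Bm g e c y * Rm g d e b c y) x)
        + ((∑ e, ∑ c, ∑ d, ∑ m, christoffel g e d m x * Bm g m c x * Rm g d e b c x)
          + ∑ e, ∑ c, ∑ d, ∑ m, Bm g e m x * christoffel g c d m x * Rm g d e b c x) := by
    have hec : ∀ e c : Fin n, ∑ d, Bm g e c x * pd d (Rm g d e b c) x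
        = (∑ d, pd d (fun y => Bm g e c y * Rm g d e b c y) x)
          + ((∑ d, ∑ m, christoffel g e d m x * Bm g m c x * Rm g d e b c x)
            + ∑ d, ∑ m, Bm g e m x * christoffel g c d m x * Rm g d e b c x) := by
      intro e c
      rw [Finset.sum_congr rfl fun d _ => hprod e c d, Finset.sum_add_distrib,
        Finset.sum_add_distrib]
    rw [Finset.sum_congr rfl fun e (_ : e ∈ Finset.univ) =>
      Finset.sum_congr rfl fun c _ => hec e c]
    rw [Finset.sum_congr rfl fun e (_ : e ∈ Finset.univ) => sum_split_add3,
      sum_split_add3]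
  -- the pure-divergence part
  have hT1a : ∑ e, ∑ c, ∑ d, pd d (fun y => Bm g e c y * Rm g d e b c y) x
      = (∑ d, ∑ m, Bm g d m x * pd d (ricci g b m) x)
        - ((∑ d, ∑ m, ∑ p, christoffel g d d p x * Bm g p m x * ricci g b m x)
          + ∑ d, ∑ m, ∑ p, Bm g d p x * christoffel g m d p x * ricci g b m x) := by
    rw [sum3_front]
    have hperd : ∀ d : Fin n, ∑ e, ∑ c, pd d (fun y => Bm g e c y * Rm g d e b c y) x
        = ∑ m, (pd d (Bm g d m) x * ricci g b m x + Bm g d m x * pd d (ricci g b m) x) := by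
      intro d
      calc ∑ e, ∑ c, pd d (fun y => Bm g e c y * Rm g d e b c y) x
          = ∑ e, pd d (fun y => ∑ c, Bm g e c y * Rm g d e b c y) x :=
            Finset.sum_congr rfl fun e _ =>
              (pd_sum _ (fun c => (smB hg e c).mul (smRm hg d e b c)) d x).symm
        _ = pd d (fun y => ∑ e, ∑ c, Bm g e c y * Rm g d e b c y) x :=
            (pd_sum _ (fun e => Sm.sum fun c _ => (smB hg e c).mul (smRm hg d e b c)) d x).symm
        _ = pd d (fun y => ∑ m, Bm g d m y * ricci g b m y) x := by
            rw [show (fun y => ∑ e, ∑ c, Bm g e c y * Rm g d e b c y)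
              = fun y => ∑ m, Bm g d m y * ricci g b m y from
                funext fun y => trBV hg d b y]
        _ = ∑ m, pd d (fun y => Bm g d m y * ricci g b m y) x :=
            pd_sum _ (fun m => (smB hg d m).mul (smRic hg b m)) d x
        _ = ∑ m, (pd d (Bm g d m) x * ricci g b m x + Bm g d m x * pd d (ricci g b m) x) :=
            Finset.sum_congr rfl fun m _ => pd_mul (smB hg d m) (smRic hg b m) d x
    rw [Finset.sum_congr rfl fun d (_ : d ∈ Finset.univ) => hperd d]
    have hperm : ∀ d m : Fin n,
        pd d (Bm g d m) x * ricci g b m x + Bm g d m x * pd d (ricci g b m) x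
          = Bm g d m x * pd d (ricci g b m) x
            - ((∑ p, christoffel g d d p x * Bm g p m x * ricci g b m x)
              + ∑ p, Bm g d p x * christoffel g m d p x * ricci g b m x) := by
      intro d m
      rw [pdB hg d d m x, neg_mul, Finset.sum_mul]
      rw [show ∑ p, (christoffel g d d p x * Bm g p m x + Bm g d p x * christoffel g m d p x)
            * ricci g b m x
          = (∑ p, christoffel g d d p x * Bm g p m x * ricci g b m x)
            + ∑ p, Bm g d p x * christoffel g m d p x * ricci g b m x from by
        rw [← Finset.sum_add_distrib]
        exact Finset.sum_congr rfl fun p _ => by ring]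
      ring
    rw [Finset.sum_congr rfl fun d (_ : d ∈ Finset.univ) =>
      Finset.sum_congr rfl fun m _ => hperm d m]
    rw [Finset.sum_congr rfl fun d (_ : d ∈ Finset.univ) => Finset.sum_sub_distrib _ _,
      Finset.sum_sub_distrib]
    rw [Finset.sum_congr rfl fun d (_ : d ∈ Finset.univ) => Finset.sum_add_distrib,
      Finset.sum_add_distrib]
  -- U1 cancels T3
  have hU1 : ∑ e, ∑ c, ∑ d, ∑ m, christoffel g e d m x * Bm g m c x * Rm g d e b c x
      = ∑ e, ∑ c, ∑ d, ∑ m, Bm g e c x * (christoffel g m d e x * Rm g d m b c x) := by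
    calc ∑ e, ∑ c, ∑ d, ∑ m, christoffel g e d m x * Bm g m c x * Rm g d e b c x
        = ∑ e, ∑ c, ∑ d, ∑ m,
            (fun e' c' d' m' => Bm g e' c' x * (christoffel g m' d' e' x * Rm g d' m' b c' x))
              m c d e := by
          refine Finset.sum_congr rfl fun e _ => Finset.sum_congr rfl fun c _ =>
            Finset.sum_congr rfl fun d _ => Finset.sum_congr rfl fun m _ => ?_
          show christoffel g e d m x * Bm g m c x * Rm g d e b c x
            = Bm g m c x * (christoffel g e d m x * Rm g d e b c x)
          ring
      _ = ∑ e, ∑ c, ∑ d, ∑ m, Bm g e c x * (christoffel g m d e x * Rm g d m b c x) :=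
          (sum4_swap14 (f := fun e' c' d' m' =>
            Bm g e' c' x * (christoffel g m' d' e' x * Rm g d' m' b c' x))).symm
  -- U2 cancels T5
  have hU2 : ∑ e, ∑ c, ∑ d, ∑ m, Bm g e m x * christoffel g c d m x * Rm g d e b c x
      = ∑ e, ∑ c, ∑ d, ∑ m, Bm g e c x * (christoffel g m d c x * Rm g d e b m x) := by
    calc ∑ e, ∑ c, ∑ d, ∑ m, Bm g e m x * christoffel g c d m x * Rm g d e b c x
        = ∑ e, ∑ c, ∑ d, ∑ m,
            (fun e' c' d' m' => Bm g e' c' x * (christoffel g m' d' c' x * Rm g d' e' b m' x))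
              e m d c := by
          refine Finset.sum_congr rfl fun e _ => Finset.sum_congr rfl fun c _ =>
            Finset.sum_congr rfl fun d _ => Finset.sum_congr rfl fun m _ => ?_
          show Bm g e m x * christoffel g c d m x * Rm g d e b c x
            = Bm g e m x * (christoffel g c d m x * Rm g d e b c x)
          ring
      _ = ∑ e, ∑ c, ∑ d, ∑ m, Bm g e c x * (christoffel g m d c x * Rm g d e b m x) :=
          (sum4_swap24 (f := fun e' c' d' m' =>
            Bm g e' c' x * (christoffel g m' d' c' x * Rm g d' e' b m' x))).symm
  -- T2 via trBV
  have hT2 : ∑ e, ∑ c, ∑ d, ∑ m, Bm g e c x * (christoffel g d d m x * Rm g m e b c x)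
      = ∑ d, ∑ m, ∑ p, christoffel g d d m x * (Bm g m p x * ricci g b p x) := by
    rw [sum4_block]
    refine Finset.sum_congr rfl fun d _ => Finset.sum_congr rfl fun m _ => ?_
    calc ∑ e, ∑ c, Bm g e c x * (christoffel g d d m x * Rm g m e b c x)
        = christoffel g d d m x * ∑ e, ∑ c, Bm g e c x * Rm g m e b c x := by
          rw [Finset.mul_sum]
          refine Finset.sum_congr rfl fun e _ => ?_
          rw [Finset.mul_sum]
          exact Finset.sum_congr rfl fun c _ => by ring
      _ = christoffel g d d m x * ∑ p, Bm g m p x * ricci g b p x := by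
          rw [trBV hg m b x]
      _ = ∑ p, christoffel g d d m x * (Bm g m p x * ricci g b p x) := by
          rw [Finset.mul_sum]
  -- T4 via trBV
  have hT4 : ∑ e, ∑ c, ∑ d, ∑ m, Bm g e c x * (christoffel g m d b x * Rm g d e m c x)
      = ∑ d, ∑ m, ∑ p, christoffel g m d b x * (Bm g d p x * ricci g m p x) := by
    rw [sum4_block]
    refine Finset.sum_congr rfl fun d _ => Finset.sum_congr rfl fun m _ => ?_
    calc ∑ e, ∑ c, Bm g e c x * (christoffel g m d b x * Rm g d e m c x)
        = christoffel g m d b x * ∑ e, ∑ c, Bm g e c x * Rm g d e m c x := by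
          rw [Finset.mul_sum]
          refine Finset.sum_congr rfl fun e _ => ?_
          rw [Finset.mul_sum]
          exact Finset.sum_congr rfl fun c _ => by ring
      _ = christoffel g m d b x * ∑ p, Bm g d p x * ricci g m p x := by
          rw [trBV hg d m x]
      _ = ∑ p, christoffel g m d b x * (Bm g d p x * ricci g m p x) := by
          rw [Finset.mul_sum]
  -- cancellation of the trace-Γ terms
  have hcancel2 : ∑ d, ∑ m, ∑ p, christoffel g d d p x * Bm g p m x * ricci g b m x
      = ∑ d, ∑ m, ∑ p, christoffel g d d m x * (Bm g m p x * ricci g b p x) := by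
    refine Finset.sum_congr rfl fun d _ => ?_
    rw [Finset.sum_comm]
    exact Finset.sum_congr rfl fun m _ => Finset.sum_congr rfl fun p _ => by ring
  -- right-hand side expansion
  have hRHS : ∑ a, ∑ c, Bm g a c x * covDeriv2 g (fun p q => ricci g p q) c a b x
      = (∑ a, ∑ c, Bm g a c x * pd c (ricci g a b) x)
        - (∑ a, ∑ c, ∑ m, Bm g a c x * (christoffel g m c a x * ricci g m b x))
        - ∑ a, ∑ c, ∑ m, Bm g a c x * (christoffel g m c b x * ricci g a m x) := by
    have hac : ∀ a c : Fin n, Bm g a c x * covDeriv2 g (fun p q => ricci g p q) c a b x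
        = Bm g a c x * pd c (ricci g a b) x
          - (∑ m, Bm g a c x * (christoffel g m c a x * ricci g m b x))
          - ∑ m, Bm g a c x * (christoffel g m c b x * ricci g a m x) := by
      intro a c
      show Bm g a c x * (pd c (ricci g a b) x
          - (∑ m, christoffel g m c a x * ricci g m b x)
          - ∑ m, christoffel g m c b x * ricci g a m x) = _
      rw [mul_sub, mul_sub, Finset.mul_sum, Finset.mul_sum]
    rw [Finset.sum_congr rfl fun a (_ : a ∈ Finset.univ) =>
      Finset.sum_congr rfl fun c _ => hac a c]
    rw [Finset.sum_congr rfl fun a (_ : a ∈ Finset.univ) => Finset.sum_sub_distrib _ _,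
      Finset.sum_sub_distrib]
    rw [Finset.sum_congr rfl fun a (_ : a ∈ Finset.univ) => Finset.sum_sub_distrib _ _,
      Finset.sum_sub_distrib]
  -- match the three surviving terms
  have hW3 : ∑ d, ∑ m, Bm g d m x * pd d (ricci g b m) x
      = ∑ a, ∑ c, Bm g a c x * pd c (ricci g a b) x := by
    rw [Finset.sum_comm]
    refine Finset.sum_congr rfl fun a _ => Finset.sum_congr rfl fun c _ => ?_
    rw [congrFun (B_symm hg c a) x, show ricci g b a = ricci g a b from ricci_symm_fun hg b a]
  have hW2 : ∑ d, ∑ m, ∑ p, Bm g d p x * christoffel g m d p x * ricci g b m x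
      = ∑ a, ∑ c, ∑ m, Bm g a c x * (christoffel g m c a x * ricci g m b x) := by
    rw [show ∑ d : Fin n, ∑ m : Fin n, ∑ p : Fin n,
          Bm g d p x * christoffel g m d p x * ricci g b m x
        = ∑ p : Fin n, ∑ d : Fin n, ∑ m : Fin n,
          Bm g d p x * christoffel g m d p x * ricci g b m x from by
      rw [← sum3_front (f := fun d m p => Bm g d p x * christoffel g m d p x * ricci g b m x)]]
    refine Finset.sum_congr rfl fun a _ => Finset.sum_congr rfl fun c _ =>
      Finset.sum_congr rfl fun m _ => ?_
    rw [congrFun (B_symm hg c a) x, ricci_symm hg b m x]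
    ring
  have hT4' : ∑ d, ∑ m, ∑ p, christoffel g m d b x * (Bm g d p x * ricci g m p x)
      = ∑ a, ∑ c, ∑ m, Bm g a c x * (christoffel g m c b x * ricci g a m x) := by
    rw [show ∑ d : Fin n, ∑ m : Fin n, ∑ p : Fin n,
          christoffel g m d b x * (Bm g d p x * ricci g m p x)
        = ∑ p : Fin n, ∑ d : Fin n, ∑ m : Fin n,
          christoffel g m d b x * (Bm g d p x * ricci g m p x) from by
      rw [← sum3_front (f := fun d m p => christoffel g m d b x * (Bm g d p x * ricci g m p x))]]
    refine Finset.sum_congr rfl fun a _ => Finset.sum_congr rfl fun c _ =>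
      Finset.sum_congr rfl fun m _ => ?_
    rw [congrFun (B_symm hg c a) x, ricci_symm hg m a x]
    ring
  rw [hL, hT1, hT1a, hU1, hU2, hT2, hT4, hRHS, ← hcancel2, ← hW3, ← hW2, ← hT4']
  ring

/-- Part (I): the contracted second Bianchi identity. -/
theorem divRic_eq (hg : IsMetric g) (b : Fin n) (x : Pt n) :
    ∑ a, ∑ c, Bm g a c x * covDeriv2 g (fun p q => ricci g p q) c a b x
      = (1 / 2) * pd b (scalarCurv g) x := by
  have hcontr : ∑ e, ∑ c, Bm g e c x * (∑ d, covRm g d d e b c x)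
      = (∑ e, ∑ c, Bm g e c x * covDeriv2 g (fun p q => ricci g p q) b e c x)
        - ∑ e, ∑ c, Bm g e c x * covDeriv2 g (fun p q => ricci g p q) c e b x := by
    rw [← Finset.sum_sub_distrib]
    refine Finset.sum_congr rfl fun e _ => ?_
    rw [← Finset.sum_sub_distrib]
    refine Finset.sum_congr rfl fun c _ => ?_
    rw [contrBianchi hg e b c x]
    ring
  have htrace : ∑ e, ∑ c, Bm g e c x * covDeriv2 g (fun p q => ricci g p q) b e c x
      = pd b (scalarCurv g) x := by
    rw [traceCov2 hg (fun i j => smRic hg i j) b x]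
    rw [show (fun y => ∑ e, ∑ c, Bm g e c y * ricci g e c y) = scalarCurv g from rfl]
  have hTl := Tlemma hg b x
  rw [hcontr, htrace] at hTl
  linarith [hTl]

end DivRic

section Hessian

variable {n : ℕ} {g : Pt n → Matrix (Fin n) (Fin n) ℝ} {f : Pt n → ℝ}

theorem smHess (hg : IsMetric g) (hf : ContDiff ℝ (⊤ : ℕ∞) f) (i j : Fin n) :
    Sm (hessian g f i j) :=
  ((Sm.pd (Sm.pd hf j) i).sub (Sm.sum fun k _ => (smGamma hg k i j).mul (Sm.pd hf k)))

theorem hess_symm (hg : IsMetric g) (hf : ContDiff ℝ (⊤ : ℕ∞) f) (i j : Fin n) (x : Pt n) :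
    hessian g f i j x = hessian g f j i x := by
  show pd i (pd j f) x - (∑ k, christoffel g k i j x * pd k f x)
      = pd j (pd i f) x - ∑ k, christoffel g k j i x * pd k f x
  rw [pd_comm hf i j x]
  rw [show (∑ k, christoffel g k i j x * pd k f x)
      = ∑ k, christoffel g k j i x * pd k f x from
    Finset.sum_congr rfl fun k _ => by rw [congrFun (Gamma_symm hg k i j) x]]

theorem hess_symm_fun (hg : IsMetric g) (hf : ContDiff ℝ (⊤ : ℕ∞) f) (i j : Fin n) :
    hessian g f i j = hessian g f j i := funext (hess_symm hg hf i j)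

theorem pdHess (hg : IsMetric g) (hf : ContDiff ℝ (⊤ : ℕ∞) f) (c a b : Fin n) (x : Pt n) :
    pd c (hessian g f a b) x
      = pd c (pd a (pd b f)) x
        - ∑ k, (pd c (christoffel g k a b) x * pd k f x
            + christoffel g k a b x * pd c (pd k f) x) := by
  have h0 : pd c (hessian g f a b) x
      = pd c (fun y => pd a (pd b f) y - ∑ k, christoffel g k a b y * pd k f y) x := rfl
  rw [h0, pd_sub (Sm.pd (Sm.pd hf b) a) (Sm.sum fun k _ => (smGamma hg k a b).mul (Sm.pd hf k)),
    pd_sum _ (fun k => (smGamma hg k a b).mul (Sm.pd hf k))]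
  congr 1
  exact Finset.sum_congr rfl fun k _ => pd_mul (smGamma hg k a b) (Sm.pd hf k) c x

/-- Ricci identity: commuting the outer indices of `∇∇(df)` produces curvature. -/
theorem RicIdHess (hg : IsMetric g) (hf : ContDiff ℝ (⊤ : ℕ∞) f) (c a b : Fin n) (x : Pt n) :
    covDeriv2 g (fun p q => hessian g f p q) c a b x
      - covDeriv2 g (fun p q => hessian g f p q) a c b x
      = -∑ k, Rm g k b c a x * pd k f x := by
  have hcov1 : covDeriv2 g (fun p q => hessian g f p q) c a b x
      = pd c (hessian g f a b) x - (∑ d, christoffel g d c a x * hessian g f d b x)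
        - ∑ d, christoffel g d c b x * hessian g f a d x := rfl
  have hcov2 : covDeriv2 g (fun p q => hessian g f p q) a c b x
      = pd a (hessian g f c b) x - (∑ d, christoffel g d a c x * hessian g f d b x)
        - ∑ d, christoffel g d a b x * hessian g f c d x := rfl
  have hS13 : ∑ d, christoffel g d c a x * hessian g f d b x
      = ∑ d, christoffel g d a c x * hessian g f d b x :=
    Finset.sum_congr rfl fun d _ => by rw [congrFun (Gamma_symm hg d c a) x]
  have hP : pd c (pd a (pd b f)) x = pd a (pd c (pd b f)) x := pd_comm (Sm.pd hf b) c a x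
  have hpd1 := pdHess hg hf c a b x
  have hpd2 := pdHess hg hf a c b x
  have hA1 : ∑ k, (pd c (christoffel g k a b) x * pd k f x
        + christoffel g k a b x * pd c (pd k f) x)
      = (∑ k, pd c (christoffel g k a b) x * pd k f x)
        + ∑ k, christoffel g k a b x * pd c (pd k f) x := Finset.sum_add_distrib
  have hA2 : ∑ k, (pd a (christoffel g k c b) x * pd k f x
        + christoffel g k c b x * pd a (pd k f) x)
      = (∑ k, pd a (christoffel g k c b) x * pd k f x)
        + ∑ k, christoffel g k c b x * pd a (pd k f) x := Finset.sum_add_distrib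
  have hS2 : ∑ d, christoffel g d c b x * hessian g f a d x
      = (∑ d, christoffel g d c b x * pd a (pd d f) x)
        - ∑ d, ∑ p, christoffel g d c b x * (christoffel g p a d x * pd p f x) := by
    rw [← Finset.sum_sub_distrib]
    refine Finset.sum_congr rfl fun d _ => ?_
    show christoffel g d c b x * (pd a (pd d f) x - ∑ p, christoffel g p a d x * pd p f x) = _
    rw [mul_sub, Finset.mul_sum]
  have hS4 : ∑ d, christoffel g d a b x * hessian g f c d x
      = (∑ d, christoffel g d a b x * pd c (pd d f) x)
        - ∑ d, ∑ p, christoffel g d a b x * (christoffel g p c d x * pd p f x) := by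
    rw [← Finset.sum_sub_distrib]
    refine Finset.sum_congr rfl fun d _ => ?_
    show christoffel g d a b x * (pd c (pd d f) x - ∑ p, christoffel g p c d x * pd p f x) = _
    rw [mul_sub, Finset.mul_sum]
  have hRm : ∑ k, Rm g k b c a x * pd k f x
      = (∑ k, pd c (christoffel g k a b) x * pd k f x)
        - (∑ k, pd a (christoffel g k c b) x * pd k f x)
        + ((∑ k, ∑ m, christoffel g k c m x * christoffel g m a b x * pd k f x)
          - ∑ k, ∑ m, christoffel g k a m x * christoffel g m c b x * pd k f x) := by
    have hk : ∀ k : Fin n, Rm g k b c a x * pd k f x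
        = pd c (christoffel g k a b) x * pd k f x
          - pd a (christoffel g k c b) x * pd k f x
          + ((∑ m, christoffel g k c m x * christoffel g m a b x * pd k f x)
            - ∑ m, christoffel g k a m x * christoffel g m c b x * pd k f x) := by
      intro k
      rw [Rm_def, add_mul, sub_mul, Finset.sum_mul]
      congr 1
      rw [← Finset.sum_sub_distrib]
      exact Finset.sum_congr rfl fun m _ => by ring
    rw [Finset.sum_congr rfl fun k _ => hk k, Finset.sum_add_distrib, Finset.sum_sub_distrib,
      Finset.sum_sub_distrib]
  have hE1 : ∑ d, ∑ p, christoffel g d c b x * (christoffel g p a d x * pd p f x)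
      = ∑ k, ∑ m, christoffel g k a m x * christoffel g m c b x * pd k f x := by
    rw [Finset.sum_comm]
    exact Finset.sum_congr rfl fun k _ => Finset.sum_congr rfl fun m _ => by ring
  have hE2 : ∑ d, ∑ p, christoffel g d a b x * (christoffel g p c d x * pd p f x)
      = ∑ k, ∑ m, christoffel g k c m x * christoffel g m a b x * pd k f x := by
    rw [Finset.sum_comm]
    exact Finset.sum_congr rfl fun k _ => Finset.sum_congr rfl fun m _ => by ring
  rw [hcov1, hcov2, hS13, hpd1, hpd2, hA1, hA2, hS2, hS4, hRm, ← hE1, ← hE2, hP]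
  ring

/-- Part (III): `½ ∂_b |∇f|² = Hess f(∇f, ·)_b`. -/
theorem gradsq_eq (hg : IsMetric g) (hf : ContDiff ℝ (⊤ : ℕ∞) f) (b : Fin n) (x : Pt n) :
    (1 / 2) * pd b (gradSq g f) x
      = ∑ a, ∑ c, Bm g a c x * pd c f x * hessian g f a b x := by
  have hsm : ∀ a c : Fin n, Sm (fun y => Bm g a c y * pd a f y * pd c f y) :=
    fun a c => ((smB hg a c).mul (Sm.pd hf a)).mul (Sm.pd hf c)
  have hpd : pd b (gradSq g f) x
      = ∑ a, ∑ c, (pd b (Bm g a c) x * pd a f x * pd c f x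
          + Bm g a c x * pd b (pd a f) x * pd c f x
          + Bm g a c x * pd a f x * pd b (pd c f) x) := by
    have h0 : pd b (gradSq g f) x
        = pd b (fun y => ∑ a, ∑ c, Bm g a c y * pd a f y * pd c f y) x := rfl
    rw [h0, pd_sum _ (fun a => Sm.sum fun c _ => hsm a c)]
    refine Finset.sum_congr rfl fun a _ => ?_
    rw [pd_sum _ (fun c => hsm a c)]
    refine Finset.sum_congr rfl fun c _ => ?_
    rw [pd_mul ((smB hg a c).mul (Sm.pd hf a)) (Sm.pd hf c),
      pd_mul (smB hg a c) (Sm.pd hf a)]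
    ring
  have hsplit : ∑ a, ∑ c, (pd b (Bm g a c) x * pd a f x * pd c f x
        + Bm g a c x * pd b (pd a f) x * pd c f x
        + Bm g a c x * pd a f x * pd b (pd c f) x)
      = (∑ a, ∑ c, pd b (Bm g a c) x * pd a f x * pd c f x)
        + (∑ a, ∑ c, Bm g a c x * pd b (pd a f) x * pd c f x)
        + ∑ a, ∑ c, Bm g a c x * pd a f x * pd b (pd c f) x := by
    rw [Finset.sum_congr rfl fun a (_ : a ∈ Finset.univ) => Finset.sum_add_distrib,
      Finset.sum_add_distrib]
    rw [Finset.sum_congr rfl fun a (_ : a ∈ Finset.univ) => Finset.sum_add_distrib,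
      Finset.sum_add_distrib]
  have h3rd : ∑ a, ∑ c, Bm g a c x * pd a f x * pd b (pd c f) x
      = ∑ a, ∑ c, Bm g a c x * pd b (pd a f) x * pd c f x := by
    rw [Finset.sum_comm]
    refine Finset.sum_congr rfl fun a _ => Finset.sum_congr rfl fun c _ => ?_
    rw [congrFun (B_symm hg c a) x]
    ring
  have hpdB : ∑ a, ∑ c, pd b (Bm g a c) x * pd a f x * pd c f x
      = -((∑ a, ∑ c, ∑ m, christoffel g a b m x * Bm g m c x * (pd a f x * pd c f x))
        + ∑ a, ∑ c, ∑ m, Bm g a m x * christoffel g c b m x * (pd a f x * pd c f x)) := by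
    have h1 : ∀ a c : Fin n, pd b (Bm g a c) x * pd a f x * pd c f x
        = -((∑ m, christoffel g a b m x * Bm g m c x * (pd a f x * pd c f x))
          + ∑ m, Bm g a m x * christoffel g c b m x * (pd a f x * pd c f x)) := by
      intro a c
      rw [pdB hg b a c x, neg_mul, neg_mul, Finset.sum_mul, Finset.sum_mul,
        ← Finset.sum_add_distrib]
      rw [← Finset.sum_neg_distrib, ← Finset.sum_neg_distrib]
      exact Finset.sum_congr rfl fun m _ => by ring
    rw [Finset.sum_congr rfl fun a (_ : a ∈ Finset.univ) =>
      Finset.sum_congr rfl fun c _ => h1 a c]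
    rw [Finset.sum_congr rfl fun a (_ : a ∈ Finset.univ) => Finset.sum_neg_distrib _,
      Finset.sum_neg_distrib]
    rw [Finset.sum_congr rfl fun a (_ : a ∈ Finset.univ) => Finset.sum_add_distrib,
      Finset.sum_add_distrib]
  have hX2X1 : ∑ a, ∑ c, ∑ m, Bm g a m x * christoffel g c b m x * (pd a f x * pd c f x)
      = ∑ a, ∑ c, ∑ m, christoffel g a b m x * Bm g m c x * (pd a f x * pd c f x) := by
    rw [Finset.sum_comm]
    refine Finset.sum_congr rfl fun a _ => Finset.sum_congr rfl fun c _ =>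
      Finset.sum_congr rfl fun m _ => ?_
    rw [congrFun (B_symm hg c m) x]
    ring
  have hRHS : ∑ a, ∑ c, Bm g a c x * pd c f x * hessian g f a b x
      = (∑ a, ∑ c, Bm g a c x * pd c f x * pd a (pd b f) x)
        - ∑ a, ∑ c, ∑ k, Bm g a c x * pd c f x * (christoffel g k a b x * pd k f x) := by
    have h1 : ∀ a c : Fin n, Bm g a c x * pd c f x * hessian g f a b x
        = Bm g a c x * pd c f x * pd a (pd b f) x
          - ∑ k, Bm g a c x * pd c f x * (christoffel g k a b x * pd k f x) := by
      intro a c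
      show Bm g a c x * pd c f x * (pd a (pd b f) x
          - ∑ k, christoffel g k a b x * pd k f x) = _
      rw [mul_sub, Finset.mul_sum]
    rw [Finset.sum_congr rfl fun a (_ : a ∈ Finset.univ) =>
      Finset.sum_congr rfl fun c _ => h1 a c]
    rw [Finset.sum_congr rfl fun a (_ : a ∈ Finset.univ) => Finset.sum_sub_distrib _ _,
      Finset.sum_sub_distrib]
  have h2nd : ∑ a, ∑ c, Bm g a c x * pd b (pd a f) x * pd c f x
      = ∑ a, ∑ c, Bm g a c x * pd c f x * pd a (pd b f) x := by
    refine Finset.sum_congr rfl fun a _ => Finset.sum_congr rfl fun c _ => ?_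
    rw [show pd b (pd a f) = pd a (pd b f) from funext (pd_comm hf b a)]
    ring
  have hY : ∑ a, ∑ c, ∑ m, christoffel g a b m x * Bm g m c x * (pd a f x * pd c f x)
      = ∑ a, ∑ c, ∑ k, Bm g a c x * pd c f x * (christoffel g k a b x * pd k f x) := by
    rw [show ∑ a : Fin n, ∑ c : Fin n, ∑ m : Fin n,
          christoffel g a b m x * Bm g m c x * (pd a f x * pd c f x)
        = ∑ a : Fin n, ∑ c : Fin n, ∑ m : Fin n,
          christoffel g m b a x * Bm g a c x * (pd m f x * pd c f x) from
      sum3_swap13 (f := fun a c m =>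
        christoffel g a b m x * Bm g m c x * (pd a f x * pd c f x))]
    refine Finset.sum_congr rfl fun a _ => Finset.sum_congr rfl fun c _ =>
      Finset.sum_congr rfl fun m _ => ?_
    rw [congrFun (Gamma_symm hg m b a) x]
    ring
  rw [hpd, hsplit, h3rd, hpdB, hX2X1, hRHS, ← h2nd, ← hY]
  ring

end Hessian

section Final

variable {n : ℕ} {g : Pt n → Matrix (Fin n) (Fin n) ℝ} {f : Pt n → ℝ}

theorem cov2H_swap (hg : IsMetric g) (hf : ContDiff ℝ (⊤ : ℕ∞) f) (a c b : Fin n) (x : Pt n) :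
    covDeriv2 g (fun p q => hessian g f p q) a c b x
      = covDeriv2 g (fun p q => hessian g f p q) a b c x := by
  show pd a (hessian g f c b) x - (∑ d, christoffel g d a c x * hessian g f d b x)
      - (∑ d, christoffel g d a b x * hessian g f c d x)
    = pd a (hessian g f b c) x - (∑ d, christoffel g d a b x * hessian g f d c x)
      - ∑ d, christoffel g d a c x * hessian g f b d x
  rw [hess_symm_fun hg hf c b]
  rw [show ∑ d, christoffel g d a c x * hessian g f d b x
      = ∑ d, christoffel g d a c x * hessian g f b d x from
    Finset.sum_congr rfl fun d _ => by rw [hess_symm hg hf d b x]]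
  rw [show ∑ d, christoffel g d a b x * hessian g f c d x
      = ∑ d, christoffel g d a b x * hessian g f d c x from
    Finset.sum_congr rfl fun d _ => by rw [hess_symm hg hf c d x]]
  ring

theorem smScal (hg : IsMetric g) : Sm (scalarCurv g) :=
  Sm.sum fun i _ => Sm.sum fun j _ => (smB hg i j).mul (smRic hg i j)

theorem smLap (hg : IsMetric g) (hf : ContDiff ℝ (⊤ : ℕ∞) f) : Sm (laplacian g f) :=
  Sm.sum fun i _ => Sm.sum fun j _ => (smB hg i j).mul (smHess hg hf i j)

theorem smGrad (hg : IsMetric g) (hf : ContDiff ℝ (⊤ : ℕ∞) f) : Sm (gradSq g f) :=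
  Sm.sum fun i _ => Sm.sum fun j _ => ((smB hg i j).mul (Sm.pd hf i)).mul (Sm.pd hf j)

/-- Part (II): Bochner-type commutation `div Hess f = d(Δf) + Ric(∇f)`. -/
theorem divHess_eq (hg : IsMetric g) (hf : ContDiff ℝ (⊤ : ℕ∞) f) (b : Fin n) (x : Pt n) :
    ∑ a, ∑ c, Bm g a c x * covDeriv2 g (fun p q => hessian g f p q) c a b x
      = pd b (laplacian g f) x + ∑ a, ∑ c, Bm g a c x * pd c f x * ricci g a b x := by
  have h0 : pd b (laplacian g f) x
      = ∑ a, ∑ c, Bm g a c x * covDeriv2 g (fun p q => hessian g f p q) b a c x := by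
    rw [traceCov2 hg (fun i j => smHess hg hf i j) b x]
    rw [show (fun y => ∑ e, ∑ c, Bm g e c y * hessian g f e c y) = laplacian g f from rfl]
  have hdiff : ∀ a c : Fin n,
      covDeriv2 g (fun p q => hessian g f p q) c a b x
        - covDeriv2 g (fun p q => hessian g f p q) b a c x
      = (∑ k, Rm g k c b a x * pd k f x) - ∑ k, Rm g k b c a x * pd k f x := by
    intro a c
    have h1 := RicIdHess hg hf c a b x
    have h2 := RicIdHess hg hf b a c x
    have h3 := cov2H_swap hg hf a c b x
    linarith [h1, h2, h3]
  have hsum : (∑ a, ∑ c, Bm g a c x * covDeriv2 g (fun p q => hessian g f p q) c a b x)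
      - (∑ a, ∑ c, Bm g a c x * covDeriv2 g (fun p q => hessian g f p q) b a c x)
      = (∑ a, ∑ c, ∑ k, Bm g a c x * (Rm g k c b a x * pd k f x))
        - ∑ a, ∑ c, ∑ k, Bm g a c x * (Rm g k b c a x * pd k f x) := by
    rw [← Finset.sum_sub_distrib, ← Finset.sum_sub_distrib]
    refine Finset.sum_congr rfl fun a _ => ?_
    rw [← Finset.sum_sub_distrib, ← Finset.sum_sub_distrib]
    refine Finset.sum_congr rfl fun c _ => ?_
    rw [← mul_sub, hdiff a c, mul_sub, Finset.mul_sum, Finset.mul_sum]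
  have hzero : ∑ a, ∑ c, ∑ k, Bm g a c x * (Rm g k b c a x * pd k f x) = 0 := by
    rw [sum3_front]
    refine Finset.sum_eq_zero fun k _ => ?_
    refine sum_antisym_zero fun a c => ?_
    rw [congrFun (B_symm hg c a) x]
    linear_combination (Bm g a c x * pd k f x) * Rm_anti (g := g) k b c a x
  have hterm1 : ∑ a, ∑ c, ∑ k, Bm g a c x * (Rm g k c b a x * pd k f x)
      = ∑ a, ∑ c, Bm g a c x * pd c f x * ricci g a b x := by
    rw [sum3_front]
    have hk : ∀ k : Fin n, ∑ a, ∑ c, Bm g a c x * (Rm g k c b a x * pd k f x)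
        = ∑ p, Bm g k p x * ricci g b p x * pd k f x := by
      intro k
      have hinner : ∑ a, ∑ c, Bm g a c x * Rm g k c b a x
          = ∑ p, Bm g k p x * ricci g b p x := by
        calc ∑ a, ∑ c, Bm g a c x * Rm g k c b a x
            = ∑ a, ∑ c, Bm g c a x * Rm g k a b c x := Finset.sum_comm
          _ = ∑ a, ∑ c, Bm g a c x * Rm g k a b c x :=
              Finset.sum_congr rfl fun a _ => Finset.sum_congr rfl fun c _ => by
                rw [congrFun (B_symm hg c a) x]
          _ = ∑ p, Bm g k p x * ricci g b p x := trBV hg k b x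
      calc ∑ a, ∑ c, Bm g a c x * (Rm g k c b a x * pd k f x)
          = (∑ a, ∑ c, Bm g a c x * Rm g k c b a x) * pd k f x := by
            rw [Finset.sum_mul]
            refine Finset.sum_congr rfl fun a _ => ?_
            rw [Finset.sum_mul]
            exact Finset.sum_congr rfl fun c _ => by ring
        _ = (∑ p, Bm g k p x * ricci g b p x) * pd k f x := by rw [hinner]
        _ = ∑ p, Bm g k p x * ricci g b p x * pd k f x := Finset.sum_mul _ _ _
    rw [Finset.sum_congr rfl fun k (_ : k ∈ Finset.univ) => hk k]
    calc ∑ k, ∑ p, Bm g k p x * ricci g b p x * pd k f x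
        = ∑ k, ∑ p, Bm g p k x * ricci g b k x * pd p f x := Finset.sum_comm
      _ = ∑ a, ∑ c, Bm g a c x * pd c f x * ricci g a b x :=
          Finset.sum_congr rfl fun a _ => Finset.sum_congr rfl fun c _ => by
            rw [congrFun (B_symm hg c a) x, ricci_symm hg b a x]
            ring
  rw [h0]
  linarith [hsum, hzero, hterm1]

end Final

end WCB


open WCB

/-- the weighted contracted Bianchi identity
`∇^a(R_{ab} + ∇_a∇_b f) − (∇^a f)(R_{ab} + ∇_a∇_b f) = ½ ∇_b (R + 2Δf − |∇f|²)`. -/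
theorem weighted_contracted_Bianchi {n : ℕ} (g : Pt n → Matrix (Fin n) (Fin n) ℝ)
    (f : Pt n → ℝ) (hg : IsMetric g) (hf : ContDiff ℝ (⊤ : ℕ∞) f) (b : Fin n) (x : Pt n) :
    (∑ a, ∑ c, (g x)⁻¹ a c *
        covDeriv2 g (fun p q y => ricci g p q y + hessian g f p q y) c a b x)
      - (∑ a, ∑ c, (g x)⁻¹ a c * pd c f x * (ricci g a b x + hessian g f a b x))
    = (1 / 2) * pd b (fun y => scalarCurv g y + 2 * laplacian g f y - gradSq g f y) x := by
  have hadd : ∀ a c : Fin n,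
      covDeriv2 g (fun p q y => ricci g p q y + hessian g f p q y) c a b x
        = covDeriv2 g (fun p q => ricci g p q) c a b x
          + covDeriv2 g (fun p q => hessian g f p q) c a b x := by
    intro a c
    show pd c (fun y => ricci g a b y + hessian g f a b y) x
        - (∑ d, christoffel g d c a x * (ricci g d b x + hessian g f d b x))
        - (∑ d, christoffel g d c b x * (ricci g a d x + hessian g f a d x))
      = (pd c (ricci g a b) x - (∑ d, christoffel g d c a x * ricci g d b x)
          - ∑ d, christoffel g d c b x * ricci g a d x)
        + (pd c (hessian g f a b) x - (∑ d, christoffel g d c a x * hessian g f d b x)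
          - ∑ d, christoffel g d c b x * hessian g f a d x)
    rw [pd_add (smRic hg a b) (smHess hg hf a b)]
    rw [show (∑ d, christoffel g d c a x * (ricci g d b x + hessian g f d b x))
        = (∑ d, christoffel g d c a x * ricci g d b x)
          + ∑ d, christoffel g d c a x * hessian g f d b x from by
      rw [← Finset.sum_add_distrib]
      exact Finset.sum_congr rfl fun d _ => by ring]
    rw [show (∑ d, christoffel g d c b x * (ricci g a d x + hessian g f a d x))
        = (∑ d, christoffel g d c b x * ricci g a d x)
          + ∑ d, christoffel g d c b x * hessian g f a d x from by
      rw [← Finset.sum_add_distrib]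
      exact Finset.sum_congr rfl fun d _ => by ring]
    ring
  show (∑ a, ∑ c, Bm g a c x *
        covDeriv2 g (fun p q y => ricci g p q y + hessian g f p q y) c a b x)
      - (∑ a, ∑ c, Bm g a c x * pd c f x * (ricci g a b x + hessian g f a b x))
    = (1 / 2) * pd b (fun y => scalarCurv g y + 2 * laplacian g f y - gradSq g f y) x
  have hL1 : ∑ a, ∑ c, Bm g a c x *
        covDeriv2 g (fun p q y => ricci g p q y + hessian g f p q y) c a b x
      = (∑ a, ∑ c, Bm g a c x * covDeriv2 g (fun p q => ricci g p q) c a b x)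
        + ∑ a, ∑ c, Bm g a c x * covDeriv2 g (fun p q => hessian g f p q) c a b x := by
    rw [Finset.sum_congr rfl fun a (_ : a ∈ Finset.univ) =>
      Finset.sum_congr rfl fun c _ => by rw [hadd a c, mul_add]]
    rw [Finset.sum_congr rfl fun a (_ : a ∈ Finset.univ) => Finset.sum_add_distrib,
      Finset.sum_add_distrib]
  have hL2 : ∑ a, ∑ c, Bm g a c x * pd c f x * (ricci g a b x + hessian g f a b x)
      = (∑ a, ∑ c, Bm g a c x * pd c f x * ricci g a b x)
        + ∑ a, ∑ c, Bm g a c x * pd c f x * hessian g f a b x := by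
    rw [Finset.sum_congr rfl fun a (_ : a ∈ Finset.univ) =>
      Finset.sum_congr rfl fun c _ => mul_add (Bm g a c x * pd c f x) _ _]
    rw [Finset.sum_congr rfl fun a (_ : a ∈ Finset.univ) => Finset.sum_add_distrib,
      Finset.sum_add_distrib]
  have hR : pd b (fun y => scalarCurv g y + 2 * laplacian g f y - gradSq g f y) x
      = pd b (scalarCurv g) x + 2 * pd b (laplacian g f) x - pd b (gradSq g f) x := by
    rw [pd_sub ((smScal hg).add ((Sm.const 2).mul (smLap hg hf))) (smGrad hg hf),
      pd_add (smScal hg) ((Sm.const 2).mul (smLap hg hf)),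
      pd_const_mul (smLap hg hf) 2]
  rw [hL1, hL2, hR]
  have h1 := divRic_eq hg b x
  have h2 := divHess_eq hg hf b x
  have h3 := gradsq_eq hg hf b x
  linarith [h1, h2, h3]
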